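/- arXiv:2002.03511 — 11 statements merged into one kernel-verified Lean document; each statement's English description precedes it below -/
import Mathlib

section
/- Let A₀ be a commutative ring and I₀ ⊆ A₀ a finitely generated ideal. Let f₀ : N₀ → M₀ be an injective homomorphism of A₀-modules whose cokernel is annihilated by I₀^m for some m ≥ 0. Then the induced map f̂₀ : N̂₀ → M̂₀ between I₀-adic completions is injective, and its cokernel is annihilated by I₀^m·Â₀ (in particular by I₀^m). -/
/-!
Since `f` is injective and `I^m M ⊆ f(N)`, we get `f⁻¹(I^n I^m M) ⊆ I^n N`: the `I`-adic
filtration of `N` and the one induced from `M` differ by a shift of at most `m`. Hence a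
sequence in `N` whose image tends to `0` `I`-adically tends to `0` itself, which gives
injectivity on completions; and for `a ∈ I^m` the preimages of `a b_n`, for an `I`-adic
Cauchy sequence `b` in `M`, form a Cauchy sequence in `N`.
-/

open Submodule

namespace LinearMap

variable {R N M : Type*} [CommSemiring R] [AddCommMonoid N] [AddCommMonoid M]
  [Module R N] [Module R M]

theorem mem_smul_top_of_apply_mem_smul_smul_top {f : N →ₗ[R] M}
    (hf : Function.Injective f) {J K : Ideal R} (hJ : J • ⊤ ≤ range f) {x : N}
    (hx : f x ∈ K • J • (⊤ : Submodule R M)) : x ∈ K • (⊤ : Submodule R N) := by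
  have hmem : f x ∈ (K • ⊤ : Submodule R N).map f := by
    rw [map_smul'', Submodule.map_top]
    exact smul_mono le_rfl hJ hx
  obtain ⟨z, hz, hzx⟩ := hmem
  rwa [← hf hzx]

end LinearMap

namespace AdicCompletion

variable {R N M : Type*} [CommRing R] (I : Ideal R) [AddCommGroup N] [AddCommGroup M]
  [Module R N] [Module R M] {f : N →ₗ[R] M}

theorem map_injective_of_pow_smul_top_le_range (hf : Function.Injective f) {m : ℕ}
    (hrange : I ^ m • ⊤ ≤ LinearMap.range f) : Function.Injective (map I f) := by
  rw [← LinearMap.ker_eq_bot, LinearMap.ker_eq_bot']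
  intro x
  induction x using AdicCompletion.induction_on with | h a => ?_
  intro hx
  refine mk_zero_of _ _ _ ⟨0, fun n _ ↦ ⟨n + m, by omega, n, by omega, ?_⟩⟩
  have hmem : f (a (n + m)) ∈ (I ^ (n + m) • ⊤ : Submodule R M) := by
    simpa using congrArg (fun z ↦ z.val (n + m)) hx
  rw [pow_add, mul_smul] at hmem
  exact f.mem_smul_top_of_apply_mem_smul_smul_top hf hrange hmem

theorem exists_map_eq_smul (hf : Function.Injective f) {J : Ideal R}
    (hJ : J • ⊤ ≤ LinearMap.range f) {a : R} (ha : a ∈ J) (y : AdicCompletion I M) :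
    ∃ x, map I f x = a • y := by
  induction y using AdicCompletion.induction_on with | h b => ?_
  have hpre : ∀ n, ∃ x, f x = a • b n := fun n ↦ hJ (smul_mem_smul ha mem_top)
  choose x hx using hpre
  have hcauchy : IsAdicCauchy I N x := by
    intro k n hkn
    have hb : b k - b n ∈ (I ^ k • ⊤ : Submodule R M) := SModEq.sub_mem.mp (b.property hkn)
    have himage : f (x k - x n) ∈ I ^ k • J • (⊤ : Submodule R M) := by
      rw [map_sub, hx, hx, ← smul_sub, ← mul_smul, mul_comm, mul_smul]
      exact smul_mem_smul ha hb
    exact SModEq.sub_mem.mpr (f.mem_smul_top_of_apply_mem_smul_smul_top hf hJ himage)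
  refine ⟨mk I N ⟨x, @hcauchy⟩, ?_⟩
  rw [← LinearMap.map_smul]
  exact (map_mk I f _).trans (congrArg (mk I M) (AdicCauchySequence.ext hx))

end AdicCompletion

theorem stmt3_general {A₀ : Type*} [CommRing A₀] (I₀ : Ideal A₀)
    {N₀ M₀ : Type*} [AddCommGroup N₀] [AddCommGroup M₀] [Module A₀ N₀] [Module A₀ M₀]
    (f₀ : N₀ →ₗ[A₀] M₀) (hinj : Function.Injective f₀)
    (m : ℕ) (hcoker : ∀ c ∈ I₀ ^ m, ∀ y : M₀, ∃ x : N₀, f₀ x = c • y) :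
    Function.Injective (AdicCompletion.map I₀ f₀) ∧
      ∀ c ∈ (I₀ ^ m).map (algebraMap A₀ (AdicCompletion I₀ A₀)),
        ∀ y : AdicCompletion I₀ M₀, ∃ x : AdicCompletion I₀ N₀,
          AdicCompletion.map I₀ f₀ x = c • y := by
  have hrange : I₀ ^ m • ⊤ ≤ LinearMap.range f₀ :=
    smul_le.mpr fun c hc y _ ↦ hcoker c hc y
  refine ⟨AdicCompletion.map_injective_of_pow_smul_top_le_range I₀ hinj hrange,
    fun c hc y ↦ ?_⟩
  -- The annihilator of the cokernel is an ideal, so it suffices to treat the images of `I₀ ^ m`.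
  have hcolon : (I₀ ^ m).map (algebraMap A₀ (AdicCompletion I₀ A₀)) ≤
      (LinearMap.range (AdicCompletion.map I₀ f₀)).colon Set.univ := by
    refine Ideal.map_le_iff_le_comap.mpr fun a ha ↦ mem_colon.mpr fun y _ ↦ ?_
    rw [algebraMap_smul]
    exact AdicCompletion.exists_map_eq_smul I₀ hinj hrange ha y
  exact mem_colon.mp (hcolon hc) y trivial

/-- Let `A₀` be a commutative ring and `I₀ ⊆ A₀` a finitely generated
ideal.  Let `f₀ : N₀ → M₀` be an injective homomorphism of `A₀`-modules whose
cokernel is annihilated by `I₀ ^ m` for some `m ≥ 0`.  Then the induced map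
between `I₀`-adic completions is injective, and its cokernel is annihilated by
`I₀ ^ m · Â₀` (in particular by `I₀ ^ m`). -/
theorem stmt3 {A₀ : Type*} [CommRing A₀] (I₀ : Ideal A₀) (hfg : I₀.FG)
    {N₀ M₀ : Type*} [AddCommGroup N₀] [AddCommGroup M₀] [Module A₀ N₀] [Module A₀ M₀]
    (f₀ : N₀ →ₗ[A₀] M₀) (hinj : Function.Injective f₀)
    (m : ℕ) (hcoker : ∀ c ∈ I₀ ^ m, ∀ y : M₀, ∃ x : N₀, f₀ x = c • y) :
    Function.Injective (AdicCompletion.map I₀ f₀) ∧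
      ∀ c ∈ (I₀ ^ m).map (algebraMap A₀ (AdicCompletion I₀ A₀)),
        ∀ y : AdicCompletion I₀ M₀, ∃ x : AdicCompletion I₀ N₀,
          AdicCompletion.map I₀ f₀ x = c • y :=
  stmt3_general I₀ f₀ hinj m hcoker
end

section
/- Let A₀ be a commutative ring with a nonzerodivisor t. Put A := A₀[1/t], A' := Â₀[1/t] (where Â₀ is the t-adic completion of A₀), and A⁺ := (A₀)⁺_A, the integral closure of A₀ in A. Let c ≥ 0 be an integer. Then t^c·A⁺ ⊆ A₀ holds if and only if t^c·(Â₀)⁺_{A'} ⊆ Â₀ holds, where (Â₀)⁺_{A'} is the integral closure of Â₀ in A'. Moreover, if these conditions hold, then the inclusion A₀ ↪ A⁺ induces an isomorphism A' ≅ (A⁺)^∧[1/t] (where (A⁺)^∧ is the t-adic completion of A⁺) whose restriction yields an isomorphism (Â₀)⁺_{A'} ≅ (A⁺)^∧. -/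
/-!
Let `τ` be the image of `t` in `Â₀`. If `y = x / τᵐ ∈ Â₀[1/t]` is a root of a monic `q` over
`Â₀`, lift `q` and `x` modulo a high power of `τ` to a monic `p` over `A₀` and to `a ∈ A₀`; then
`z = a / tᵐ` satisfies `p(z) ∈ A₀`, so `z ∈ A⁺`, and `tᶜ z ∈ A₀` yields `τᶜ y ∈ Â₀`. Conversely
`A⁺` maps into `(Â₀)⁺`, and `A₀ / tᵐ ↪ Â₀ / τᵐ` brings `τᶜ y ∈ Â₀` back down to `A₀`.

If `tᶜ A⁺ ⊆ A₀`, then `A₀ ∩ tⁿ⁺ᶜ A⁺ ⊆ tⁿ A₀`, so the map `g : Â₀ → (A⁺)^∧` is injective and, by a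
Cauchy sequence argument, `tᶜ (A⁺)^∧ ⊆ g(Â₀)`; hence `g[1/t]` is bijective. The first part applied
to `A⁺` itself with `c = 0` shows that `(A⁺)^∧` is integrally closed in `(A⁺)^∧[1/t]`, which
identifies the image of `(Â₀)⁺`.
-/

/-- `ι : R →+* C` realizes `C` as the `t`-adic completion of `R`:
`C` is `(ι t)`-adically complete (and separated), every element of `C` is
congruent to an element of `R` modulo each `(ι t)ⁿ·C`, and `ι` induces
injections `R/tⁿ → C/(ι t)ⁿ` for all `n`. -/
def IsAdicCompletionMap {R C : Type*} [CommRing R] [CommRing C]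
    (t : R) (ι : R →+* C) : Prop :=
  IsAdicComplete (Ideal.span {ι t}) C ∧
  (∀ n : ℕ, ∀ c : C, ∃ a : R, c - ι a ∈ Ideal.span {ι t} ^ n) ∧
  (∀ n : ℕ, ∀ a : R, ι a ∈ Ideal.span {ι t} ^ n → a ∈ Ideal.span {t} ^ n)

open Polynomial

theorem Ideal.mem_span_singleton_pow_smul_top_iff {S : Type*} [CommRing S] {s x : S} {n : ℕ} :
    x ∈ (Ideal.span {s} ^ n • ⊤ : Submodule S S) ↔ s ^ n ∣ x := by
  rw [smul_eq_mul, Ideal.mul_top, Ideal.span_singleton_pow, Ideal.mem_span_singleton]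

namespace IsAdicCompletionMap

variable {R S : Type*} [CommRing R] [CommRing S] {t : R} {ι : R →+* S}

theorem exists_dvd_sub (h : IsAdicCompletionMap t ι) (n : ℕ) (x : S) :
    ∃ a, ι t ^ n ∣ x - ι a := by
  simpa [Ideal.span_singleton_pow, Ideal.mem_span_singleton] using h.2.1 n x

theorem dvd_of_dvd_map (h : IsAdicCompletionMap t ι) {n : ℕ} {a : R} (ha : ι t ^ n ∣ ι a) :
    t ^ n ∣ a := by
  simpa [Ideal.span_singleton_pow, Ideal.mem_span_singleton] using
    h.2.2 n a (by simpa [Ideal.span_singleton_pow, Ideal.mem_span_singleton] using ha)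

theorem eq_zero_of_forall_dvd (h : IsAdicCompletionMap t ι) {x : S} (hx : ∀ n, ι t ^ n ∣ x) :
    x = 0 :=
  h.1.toIsHausdorff.haus' x fun n ↦ by
    simpa only [SModEq.zero, Ideal.mem_span_singleton_pow_smul_top_iff] using hx n

theorem exists_forall_dvd_sub (h : IsAdicCompletionMap t ι) {x : ℕ → S}
    (hx : ∀ {m n}, m ≤ n → ι t ^ m ∣ x n - x m) : ∃ z, ∀ n, ι t ^ n ∣ x n - z := by
  obtain ⟨z, hz⟩ := h.1.toIsPrecomplete.prec' x fun hmn ↦ by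
    rw [SModEq.sub_mem, Ideal.mem_span_singleton_pow_smul_top_iff, ← dvd_neg, neg_sub]
    exact hx hmn
  exact ⟨z, fun n ↦ by
    simpa only [SModEq.sub_mem, Ideal.mem_span_singleton_pow_smul_top_iff] using hz n⟩

theorem map_mem_nonZeroDivisors (h : IsAdicCompletionMap t ι) (ht : t ∈ nonZeroDivisors R) :
    ι t ∈ nonZeroDivisors S := by
  refine mem_nonZeroDivisors_iff_right.2 fun x hx ↦ h.eq_zero_of_forall_dvd fun n ↦ ?_
  obtain ⟨a, s, hs⟩ := h.exists_dvd_sub n x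
  have hta : t ^ (n + 1) ∣ t * a :=
    h.dvd_of_dvd_map ⟨-s, by rw [map_mul, pow_succ]; linear_combination -ι t * hs + hx⟩
  obtain ⟨b, hb⟩ := hta
  have hab : a = t ^ n * b :=
    (isRegular_iff_mem_nonZeroDivisors.2 ht).left (show t * a = t * (t ^ n * b) by rw [hb]; ring)
  exact ⟨ι b + s, by rw [← sub_add_cancel x (ι a), hs, hab, map_mul, map_pow]; ring⟩

end IsAdicCompletionMap

namespace Polynomial

variable {R S T : Type*} [CommRing R] [CommRing S] [CommRing T]

theorem exists_monic_map_eq_map [Nontrivial R] {f : R →+* T} (hf : Function.Surjective f)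
    (π : S →+* T) {q : S[X]} (hq : q.Monic) :
    ∃ p : R[X], p.Monic ∧ p.natDegree = q.natDegree ∧ p.map f = q.map π := by
  rcases subsingleton_or_nontrivial T with hT | hT
  · exact ⟨X ^ q.natDegree, monic_X_pow _, natDegree_X_pow _, Subsingleton.elim _ _⟩
  · obtain ⟨p, hmap, hdeg, hp⟩ := lifts_and_natDegree_eq_and_monic
      ((lifts_iff_set_range _).2 (map_surjective f hf _)) (hq.map π)
    exact ⟨p, hp, hdeg.trans (hq.natDegree_map π), hmap⟩

theorem map_scaleRoots_eq_map_scaleRoots {f : R →+* T} {π : S →+* T} {p : R[X]} {q : S[X]}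
    (hmap : p.map f = q.map π) (hdeg : p.natDegree = q.natDegree) {r : R} {s : S}
    (hrs : f r = π s) : (p.scaleRoots r).map f = (q.scaleRoots s).map π := by
  ext i
  have hi := congrArg (coeff · i) hmap
  simp only [coeff_map] at hi
  simp only [coeff_map, coeff_scaleRoots, map_mul, map_pow, hdeg, hrs, hi]

end Polynomial

theorem isIntegral_of_aeval_scaleRoots {R A : Type*} [CommRing R] [CommRing A] [Algebra R A]
    {p : R[X]} (hp : p.Monic) (hdeg : p.natDegree ≠ 0) {s b : R}
    (hs : IsUnit (algebraMap R A s)) {z : A}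
    (h : aeval (algebraMap R A s * z) (p.scaleRoots s) = algebraMap R A (s ^ p.natDegree * b)) :
    IsIntegral R z := by
  refine IsIntegral.of_aeval_monic hp hdeg ?_
  have hz : aeval z p = algebraMap R A b := (hs.pow p.natDegree).mul_left_cancel <| by
    rw [← map_pow, ← map_mul, ← h, aeval_def, aeval_def, scaleRoots_eval₂_mul, map_pow]
  rw [hz]
  exact isIntegral_algebraMap

namespace IsLocalization.Away

theorem map_algebraMap {R P S Q : Type*} [CommRing R] [CommRing P] [CommRing S] [CommRing Q]
    [Algebra R S] [Algebra P Q] (f : R →+* P) (r : R) [IsLocalization.Away r S]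
    [IsLocalization.Away (f r) Q] (x : R) :
    map S Q f r (algebraMap R S x) = algebraMap P Q (f x) :=
  IsLocalization.map_eq _ _

theorem map_bijective_of_pow_mul_mem_range {S D S' E : Type*} [CommRing S] [CommRing D]
    [CommRing S'] [CommRing E] [Algebra S S'] [Algebra D E] {g : S →+* D} {τ : S}
    [IsLocalization.Away τ S'] [IsLocalization.Away (g τ) E] {c : ℕ}
    (hg : Function.Injective g) (hc : ∀ d, g τ ^ c * d ∈ g.range) :
    Function.Bijective (map S' E g τ) := by
  refine ⟨(map_injective_iff E g τ).2 fun a ha ↦ ⟨0, ?_⟩,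
    (map_surjective_iff S' E g τ).2 fun d ↦ ?_⟩
  · rw [hg (ha.trans (map_zero g).symm), mul_zero]
  · obtain ⟨b, hb⟩ := hc d
    exact ⟨b, c, hb⟩

section Subalgebra

variable {R A : Type*} [CommRing R] [CommRing A] [Algebra R A]

theorem injective_algebraMap_subalgebra {t : R} (ht : t ∈ nonZeroDivisors R)
    [IsLocalization.Away t A] (B : Subalgebra R A) : Function.Injective (algebraMap R B) :=
  fun _ _ h ↦ IsLocalization.injective A (Submonoid.powers_le.2 ht) (congrArg Subtype.val h)

variable (t : R) [IsLocalization.Away t A] (B : Subalgebra R A)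

theorem subalgebra : IsLocalization.Away (algebraMap R B t) A where
  map_units := by
    rintro ⟨_, n, rfl⟩
    simpa using (algebraMap_isUnit t).pow n
  surj z := by
    obtain ⟨n, a, h⟩ := surj t z
    exact ⟨⟨algebraMap R B a, _, n, rfl⟩, by simpa using h⟩
  exists_of_eq h := ⟨1, by simpa using Subtype.val_injective h⟩

theorem algebraMap_mem_nonZeroDivisors_subalgebra : algebraMap R B t ∈ nonZeroDivisors B :=
  mem_nonZeroDivisors_iff_right.2 fun x hx ↦ Subtype.ext <|
    (algebraMap_isUnit t).mul_right_cancel (by simpa using congrArg Subtype.val hx)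

end Subalgebra

end IsLocalization.Away

/-- `r • R⁺ ⊆ R` for the integral closure `R⁺` of `R` in `A`; for `r = tᶜ` this is `tᶜ A⁺ ⊆ A₀`.
-/
def IsIntegralConductor (R : Type*) {A : Type*} [CommRing R] [CommRing A] [Algebra R A]
    (r : A) : Prop :=
  ∀ x ∈ integralClosure R A, r * x ∈ (algebraMap R A).range

section Completion

variable {R A S S' : Type*} [CommRing R] [CommRing A] [CommRing S] [CommRing S'] [Algebra R A]
  [Algebra R S] [Algebra S S'] {t : R}

theorem IsAdicCompletionMap.exists_approx_mem_integralClosure [Nontrivial R]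
    [IsLocalization.Away t A] (hS : IsAdicCompletionMap t (algebraMap R S)) {q : S[X]}
    (hq : q.Monic) (hq0 : q.natDegree ≠ 0) {m : ℕ} {x : S}
    (hx : (q.scaleRoots (algebraMap R S t ^ m)).eval x = 0) (N : ℕ) :
    ∃ a : R, algebraMap R S t ^ N ∣ x - algebraMap R S a ∧
      ∃ z ∈ integralClosure R A, algebraMap R A (t ^ m) * z = algebraMap R A a := by
  set n := q.natDegree with hn
  set ι := algebraMap R S
  set π := Ideal.Quotient.mk (Ideal.span {ι t ^ (N + m * n)})
  have hπ : ∀ {y : S} {a : R}, ι t ^ (N + m * n) ∣ y - ι a → π y = π (ι a) := fun h ↦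
    Ideal.Quotient.eq.2 (Ideal.mem_span_singleton.2 h)
  have hπι : Function.Surjective (π.comp ι) := by
    intro y
    obtain ⟨y, rfl⟩ := Ideal.Quotient.mk_surjective y
    obtain ⟨a, ha⟩ := hS.exists_dvd_sub (N + m * n) y
    exact ⟨a, (hπ ha).symm⟩
  -- the extra `m * n` in the precision absorbs the denominator `(tᵐ)ⁿ` of `p(a / tᵐ)`
  obtain ⟨p, hp, hpn, hpq⟩ := exists_monic_map_eq_map hπι π hq
  obtain ⟨a, ha⟩ := hS.exists_dvd_sub (N + m * n) x
  have hPa : ι t ^ (N + m * n) ∣ ι ((p.scaleRoots (t ^ m)).eval a) := by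
    rw [← Ideal.mem_span_singleton, ← Ideal.Quotient.eq_zero_iff_mem]
    calc π (ι ((p.scaleRoots (t ^ m)).eval a))
        = ((p.scaleRoots (t ^ m)).map (π.comp ι)).eval (π (ι a)) := by
          rw [eval_map, ← RingHom.comp_apply π ι a, eval₂_at_apply, RingHom.comp_apply]
      _ = ((q.scaleRoots (ι t ^ m)).map π).eval (π x) := by
          rw [map_scaleRoots_eq_map_scaleRoots hpq hpn (by rw [RingHom.comp_apply, map_pow]),
            hπ ha]
      _ = 0 := by rw [eval_map, eval₂_at_apply, hx, map_zero]
  obtain ⟨e, he⟩ := hS.dvd_of_dvd_map hPa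
  have htm : t ^ m ∈ Submonoid.powers t := ⟨m, rfl⟩
  have hz : algebraMap R A (t ^ m) * IsLocalization.mk' A a ⟨t ^ m, htm⟩ = algebraMap R A a :=
    IsLocalization.mk'_spec' A a ⟨t ^ m, htm⟩
  refine ⟨a, (pow_dvd_pow _ (Nat.le_add_right _ _)).trans ha, _, ?_, hz⟩
  refine isIntegral_of_aeval_scaleRoots hp (hpn ▸ hq0)
    (IsLocalization.map_units A ⟨t ^ m, htm⟩) (s := t ^ m) (b := t ^ N * e) ?_
  rw [hz, aeval_algebraMap_apply, coe_aeval_eq_eval, he, hpn, ← hn]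
  ring_nf

theorem IsIntegralConductor.completion (ht : t ∈ nonZeroDivisors R) [IsLocalization.Away t A]
    (hS : IsAdicCompletionMap t (algebraMap R S)) [IsLocalization.Away (algebraMap R S t) S']
    {c : ℕ} (H : IsIntegralConductor R (algebraMap R A t ^ c)) :
    IsIntegralConductor S (algebraMap S S' (algebraMap R S t) ^ c) := by
  intro y hy
  rcases subsingleton_or_nontrivial S' with hS' | hS'
  · exact ⟨0, Subsingleton.elim _ _⟩
  have : Nontrivial R := ((algebraMap S S').comp (algebraMap R S)).domain_nontrivial
  set τ := algebraMap R S t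
  have hinjA : Function.Injective (algebraMap R A) :=
    IsLocalization.injective A (Submonoid.powers_le.2 ht)
  have hinjS : Function.Injective (algebraMap S S') :=
    IsLocalization.injective S' (Submonoid.powers_le.2 (hS.map_mem_nonZeroDivisors ht))
  obtain ⟨q, hq, hqy⟩ := hy
  have hq0 : q.natDegree ≠ 0 := fun h ↦
    one_ne_zero (by rwa [hq.natDegree_eq_zero.1 h, eval₂_one] at hqy)
  obtain ⟨m, x, hxy⟩ := IsLocalization.Away.surj τ y
  have hx : (q.scaleRoots (τ ^ m)).eval x = 0 := hinjS <| by
    rw [← eval₂_at_apply, ← hxy, mul_comm y, ← map_pow, map_zero]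
    exact scaleRoots_eval₂_eq_zero _ hqy
  obtain ⟨a, ⟨s, hs⟩, z, hz, hza⟩ :=
    hS.exists_approx_mem_integralClosure (A := A) hq hq0 hx m
  obtain ⟨a', ha'⟩ := H z hz
  have haa' : τ ^ c * algebraMap R S a = τ ^ m * algebraMap R S a' := by
    rw [← map_pow, ← map_mul, ← map_pow, ← map_mul]
    exact congrArg _ (hinjA (by rw [map_mul, map_mul, ha', ← hza, map_pow]; ring))
  refine ⟨algebraMap R S a' + τ ^ c * s,
    ((IsLocalization.Away.algebraMap_isUnit τ).pow m).mul_left_cancel ?_⟩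
  have hs' := congrArg (algebraMap S S') hs
  have haa'' := congrArg (algebraMap S S') haa'
  simp only [map_add, map_sub, map_mul, map_pow] at hs' haa'' ⊢
  linear_combination (-algebraMap S S' τ ^ c) * hxy - algebraMap S S' τ ^ c * hs' - haa''

theorem IsIntegralConductor.of_completion (ht : t ∈ nonZeroDivisors R) [IsLocalization.Away t A]
    (hS : IsAdicCompletionMap t (algebraMap R S)) [IsLocalization.Away (algebraMap R S t) S']
    {c : ℕ} (H : IsIntegralConductor S (algebraMap S S' (algebraMap R S t) ^ c)) :
    IsIntegralConductor R (algebraMap R A t ^ c) := by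
  intro x hx
  set τ := algebraMap R S t
  set f := IsLocalization.Away.map A S' (algebraMap R S) t
  have hf : ∀ r, f (algebraMap R A r) = algebraMap S S' (algebraMap R S r) :=
    IsLocalization.Away.map_algebraMap _ t
  have hinjS : Function.Injective (algebraMap S S') :=
    IsLocalization.injective S' (Submonoid.powers_le.2 (hS.map_mem_nonZeroDivisors ht))
  obtain ⟨z, hz⟩ :=
    H (f x) (hx.map_of_comp_eq (algebraMap R S) f (RingHom.ext fun r ↦ (hf r).symm))
  obtain ⟨m, a, hxa⟩ := IsLocalization.Away.surj t x
  have hza : τ ^ m * z = τ ^ c * algebraMap R S a := hinjS <| by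
    have := congrArg f hxa
    rw [map_mul, map_pow, hf, hf] at this
    rw [map_mul, map_mul, map_pow, map_pow, hz, ← this]
    ring
  obtain ⟨b, hb⟩ :=
    hS.dvd_of_dvd_map (n := m) (a := t ^ c * a) ⟨z, by rw [map_mul, map_pow, ← hza]⟩
  refine ⟨b, ((IsLocalization.Away.algebraMap_isUnit t).pow m).mul_left_cancel ?_⟩
  have hb' := congrArg (algebraMap R A) hb
  simp only [map_mul, map_pow] at hb' ⊢
  linear_combination -hb' - algebraMap R A t ^ c * hxa

end Completion

section CompletionComparison

variable {R B S D : Type*} [CommRing R] [CommRing B] [CommRing S] [CommRing D] [Algebra R B]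
  [Algebra R S] [Algebra B D] {t : R} {c : ℕ}

namespace IsAdicCompletionMap

theorem dvd_of_dvd_algebraMap_comp (hφ : Function.Injective (algebraMap R B))
    (hc : ∀ b : B, algebraMap R B t ^ c * b ∈ (algebraMap R B).range)
    (hD : IsAdicCompletionMap (algebraMap R B t) (algebraMap B D)) {n : ℕ} {a : R}
    (ha : algebraMap B D (algebraMap R B t) ^ (n + c) ∣ algebraMap B D (algebraMap R B a)) :
    t ^ n ∣ a := by
  obtain ⟨u, hu⟩ := hD.dvd_of_dvd_map ha
  obtain ⟨b, hb⟩ := hc u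
  exact ⟨b, hφ (by rw [hu, map_mul, map_pow, hb, pow_add, mul_assoc])⟩

theorem injective_of_pow_mul_mem_range (hφ : Function.Injective (algebraMap R B))
    (hc : ∀ b : B, algebraMap R B t ^ c * b ∈ (algebraMap R B).range)
    (hS : IsAdicCompletionMap t (algebraMap R S))
    (hD : IsAdicCompletionMap (algebraMap R B t) (algebraMap B D)) {g : S →+* D}
    (hg : ∀ a, g (algebraMap R S a) = algebraMap B D (algebraMap R B a)) :
    Function.Injective g := by
  refine (injective_iff_map_eq_zero g).2 fun x hx ↦ hS.eq_zero_of_forall_dvd fun n ↦ ?_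
  obtain ⟨a, s, hs⟩ := hS.exists_dvd_sub (n + c) x
  have hgs := congrArg g hs
  rw [map_sub, hx, hg, map_mul, map_pow, hg] at hgs
  obtain ⟨b, rfl⟩ :=
    dvd_of_dvd_algebraMap_comp hφ hc hD (n := n) ⟨-g s, by linear_combination -hgs⟩
  refine ⟨algebraMap R S b + algebraMap R S t ^ c * s, ?_⟩
  rw [← sub_add_cancel x (algebraMap R S (t ^ n * b)), hs, map_mul, map_pow, pow_add]
  ring

theorem pow_mul_mem_range (hφ : Function.Injective (algebraMap R B))
    (hc : ∀ b : B, algebraMap R B t ^ c * b ∈ (algebraMap R B).range)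
    (hS : IsAdicCompletionMap t (algebraMap R S))
    (hD : IsAdicCompletionMap (algebraMap R B t) (algebraMap B D)) {g : S →+* D}
    (hg : ∀ a, g (algebraMap R S a) = algebraMap B D (algebraMap R B a)) (d : D) :
    algebraMap B D (algebraMap R B t) ^ c * d ∈ g.range := by
  set τD := algebraMap B D (algebraMap R B t)
  choose b hb using fun n ↦ hD.exists_dvd_sub n d
  choose a ha using fun n ↦ hc (b n)
  -- `z = lim a n`, where `a n = tᶜ b n` in `B` and `b n → d` in `D`
  have hcauchy : ∀ {m n}, m ≤ n →
      algebraMap R S t ^ m ∣ algebraMap R S (a n) - algebraMap R S (a m) := by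
    intro m n hmn
    rw [← map_sub, ← map_pow]
    refine map_dvd _ (dvd_of_dvd_algebraMap_comp hφ hc hD ?_)
    have hbnm : τD ^ m ∣ algebraMap B D (b n) - algebraMap B D (b m) := by
      simpa using dvd_sub (hb m) ((pow_dvd_pow τD hmn).trans (hb n))
    rw [map_sub, ha, ha, ← mul_sub, map_mul, map_pow, pow_add, mul_comm, map_sub]
    exact mul_dvd_mul_left _ hbnm
  obtain ⟨z, hz⟩ := hS.exists_forall_dvd_sub hcauchy
  refine ⟨z, sub_eq_zero.1 (hD.eq_zero_of_forall_dvd fun n ↦ ?_)⟩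
  have hgz : τD ^ n ∣ algebraMap B D (algebraMap R B (a n)) - g z := by
    simpa [hg] using map_dvd g (hz n)
  have key : g z - τD ^ c * d =
      -(algebraMap B D (algebraMap R B (a n)) - g z) - τD ^ c * (d - algebraMap B D (b n)) := by
    rw [ha, map_mul, map_pow]
    ring
  rw [key]
  exact dvd_sub (dvd_neg.2 hgz) (dvd_mul_of_dvd_right (hb n) _)

end IsAdicCompletionMap

end CompletionComparison

section IntegralClosureCompletion

variable {R A S S' D E : Type*} [CommRing R] [CommRing A] [CommRing S] [CommRing S'] [CommRing D]
  [CommRing E] [Algebra R A] [Algebra R S] [Algebra S S'] [Algebra (integralClosure R A) D]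
  [Algebra D E] {t : R} {c : ℕ}

theorem IsIntegralConductor.pow_mul_mem_range (H : IsIntegralConductor R (algebraMap R A t ^ c))
    (b : integralClosure R A) :
    algebraMap R (integralClosure R A) t ^ c * b ∈
      (algebraMap R (integralClosure R A)).range := by
  obtain ⟨a, ha⟩ := H b b.2
  exact ⟨a, Subtype.ext (by simpa using ha)⟩

theorem bijective_of_isIntegralConductor (ht : t ∈ nonZeroDivisors R) [IsLocalization.Away t A]
    (hS : IsAdicCompletionMap t (algebraMap R S)) [IsLocalization.Away (algebraMap R S t) S']
    (hD : IsAdicCompletionMap (algebraMap R (integralClosure R A) t)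
      (algebraMap (integralClosure R A) D))
    [IsLocalization.Away (algebraMap (integralClosure R A) D (algebraMap R _ t)) E]
    (hc : IsIntegralConductor R (algebraMap R A t ^ c)) {g : S →+* D}
    (hg : ∀ a, g (algebraMap R S a) = algebraMap (integralClosure R A) D (algebraMap R _ a))
    {θ : S' →+* E} (hθ : ∀ x, θ (algebraMap S S' x) = algebraMap D E (g x)) :
    Function.Bijective θ := by
  have : IsLocalization.Away (g (algebraMap R S t)) E := by rwa [hg t]
  have hθ' : θ = IsLocalization.Away.map S' E g (algebraMap R S t) :=
    IsLocalization.ringHom_ext (Submonoid.powers (algebraMap R S t)) <| RingHom.ext fun x ↦ by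
      simp only [RingHom.comp_apply, hθ, IsLocalization.Away.map_algebraMap]
  rw [hθ']
  have hφ := IsLocalization.Away.injective_algebraMap_subalgebra ht (integralClosure R A)
  refine IsLocalization.Away.map_bijective_of_pow_mul_mem_range (c := c)
    (hS.injective_of_pow_mul_mem_range hφ hc.pow_mul_mem_range hD hg) fun d ↦ ?_
  rw [hg t]
  exact hS.pow_mul_mem_range hφ hc.pow_mul_mem_range hD hg d

theorem image_integralClosure_eq_range (ht : t ∈ nonZeroDivisors R) [IsLocalization.Away t A]
    (hS : IsAdicCompletionMap t (algebraMap R S)) [IsLocalization.Away (algebraMap R S t) S']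
    (hD : IsAdicCompletionMap (algebraMap R (integralClosure R A) t)
      (algebraMap (integralClosure R A) D))
    [IsLocalization.Away (algebraMap (integralClosure R A) D (algebraMap R _ t)) E]
    (hc : IsIntegralConductor R (algebraMap R A t ^ c)) {g : S →+* D}
    (hg : ∀ a, g (algebraMap R S a) = algebraMap (integralClosure R A) D (algebraMap R _ a))
    {θ : S' →+* E} (hθ : ∀ x, θ (algebraMap S S' x) = algebraMap D E (g x)) :
    θ '' integralClosure S S' = Set.range (algebraMap D E) := by
  have := IsLocalization.Away.subalgebra t (integralClosure R A)
  apply subset_antisymm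
  · rintro _ ⟨y, hy, rfl⟩
    -- the forward direction for `A⁺ ⊆ A` with `c = 0`: `D` is integrally closed in `E`
    have hDE : IsIntegralConductor D
        (algebraMap D E (algebraMap _ D (algebraMap R (integralClosure R A) t)) ^ 0) :=
      IsIntegralConductor.completion (A := A)
        (IsLocalization.Away.algebraMap_mem_nonZeroDivisors_subalgebra t (integralClosure R A)) hD
        fun x hx ↦ ⟨⟨x, isIntegral_trans x hx⟩, by simp⟩
    simpa using hDE (θ y) (hy.map_of_comp_eq g θ (RingHom.ext fun x ↦ (hθ x).symm))
  · rintro _ ⟨d, rfl⟩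
    set f := IsLocalization.Away.map A S' (algebraMap R S) t
    have hθf : θ.comp f = IsLocalization.Away.map A E (algebraMap (integralClosure R A) D)
        (algebraMap R (integralClosure R A) t) :=
      IsLocalization.ringHom_ext (Submonoid.powers t) <| RingHom.ext fun a ↦ by
        simp only [RingHom.comp_apply, f, IsLocalization.Away.map_algebraMap, hθ, hg]
        rw [IsScalarTower.algebraMap_apply R (integralClosure R A) A,
          IsLocalization.Away.map_algebraMap]
    have hφ := IsLocalization.Away.injective_algebraMap_subalgebra ht (integralClosure R A)
    obtain ⟨b, e, he⟩ := hD.exists_dvd_sub c d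
    obtain ⟨z, hz⟩ := hS.pow_mul_mem_range hφ hc.pow_mul_mem_range hD hg e
    refine ⟨f b + algebraMap S S' z, add_mem ?_ (Subalgebra.algebraMap_mem _ _), ?_⟩
    · exact b.2.map_of_comp_eq (algebraMap R S) f <| RingHom.ext fun a ↦
        (IsLocalization.Away.map_algebraMap (S := A) (Q := S') (algebraMap R S) t a).symm
    · have hb : θ (f b) = algebraMap D E (algebraMap _ D b) := by
        rw [← RingHom.comp_apply, hθf]
        exact IsLocalization.Away.map_algebraMap (S := A) (Q := E) _ _ b
      rw [map_add, hb, hθ, hz, ← map_add, ← he, add_sub_cancel]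
end IntegralClosureCompletion

/-- Let `A₀` be a commutative ring with a nonzerodivisor `t`;
`A := A₀[1/t]`; `C := Â₀` the `t`-adic completion; `A' := Â₀[1/t]`;
`A⁺ := (A₀)⁺_A` the integral closure of `A₀` in `A`; `D := (A⁺)^∧` the `t`-adic
completion of `A⁺`; and `E := (A⁺)^∧[1/t]`.  Then for `c ≥ 0`:
`t^c·A⁺ ⊆ A₀` holds iff `t^c·(Â₀)⁺_{A'} ⊆ Â₀` holds.  Moreover, if these
conditions hold, then the map `θ : A' → E` induced by the inclusion
`A₀ ↪ A⁺` (i.e. the localization of the induced map `g : Â₀ → (A⁺)^∧` on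
completions) is a ring isomorphism whose restriction maps `(Â₀)⁺_{A'}`
isomorphically onto `(A⁺)^∧`. -/
theorem stmt4 {A₀ A C A' D E : Type*}
    [CommRing A₀] [CommRing A] [CommRing C] [CommRing A'] [CommRing D] [CommRing E]
    [Algebra A₀ A] [Algebra A₀ C] [Algebra C A']
    [Algebra (integralClosure A₀ A) D] [Algebra D E]
    (t : A₀) (ht : t ∈ nonZeroDivisors A₀)
    [IsLocalization.Away t A]
    (hC : IsAdicCompletionMap t (algebraMap A₀ C))
    [IsLocalization.Away (algebraMap A₀ C t) A']
    (hD : IsAdicCompletionMap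
      (⟨algebraMap A₀ A t, isIntegral_algebraMap⟩ : integralClosure A₀ A)
      (algebraMap (integralClosure A₀ A) D))
    [IsLocalization.Away
      (algebraMap (integralClosure A₀ A) D
        (⟨algebraMap A₀ A t, isIntegral_algebraMap⟩ : integralClosure A₀ A)) E]
    (c : ℕ) :
    ((∀ x ∈ integralClosure A₀ A,
        algebraMap A₀ A t ^ c * x ∈ (algebraMap A₀ A).range) ↔
      (∀ y ∈ integralClosure C A',
        algebraMap C A' (algebraMap A₀ C t) ^ c * y ∈ (algebraMap C A').range)) ∧
    ((∀ x ∈ integralClosure A₀ A,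
        algebraMap A₀ A t ^ c * x ∈ (algebraMap A₀ A).range) →
      ∀ g : C →+* D, (∀ a : A₀, g (algebraMap A₀ C a) =
          algebraMap (integralClosure A₀ A) D
            (⟨algebraMap A₀ A a, isIntegral_algebraMap⟩ : integralClosure A₀ A)) →
      ∀ θ : A' →+* E, (∀ x : C, θ (algebraMap C A' x) = algebraMap D E (g x)) →
        Function.Bijective θ ∧
          θ '' (integralClosure C A' : Set A') = Set.range (algebraMap D E)) := by
  -- the given instance, with `t ∈ A⁺` written through `algebraMap` so that instance search finds it
  have : IsLocalization.Away
      (algebraMap (integralClosure A₀ A) D (algebraMap A₀ (integralClosure A₀ A) t)) E :=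
    ‹_›
  exact ⟨⟨IsIntegralConductor.completion ht hC, IsIntegralConductor.of_completion ht hC⟩,
    fun hc _ hg _ hθ ↦ ⟨bijective_of_isIntegralConductor ht hC hD hc hg hθ,
      image_integralClosure_eq_range ht hC hD hc hg hθ⟩⟩
end

section
/- Let A₀ be a commutative ring with a nonzerodivisor t. Put A := A₀[1/t] and A' := Â₀[1/t], where Â₀ is the t-adic completion of A₀. Then: (1) A₀ is integrally closed in A (i.e. (A₀)⁺_A = A₀) if and only if Â₀ is integrally closed in A' (i.e. (Â₀)⁺_{A'} = Â₀); (2) A₀ is completely integrally closed in A (i.e. (A₀)*_A = A₀) if and only if Â₀ is completely integrally closed in A' (i.e. (Â₀)*_{A'} = Â₀). -/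
open Polynomial

namespace IsLocalization

variable {R S : Type*} [CommRing R] [CommRing S] [Algebra R S]

theorem exists_mem_forall_mul_mem_range_of_fg (M : Submonoid R) [IsLocalization M S]
    {N : Submodule R S} (hN : N.FG) :
    ∃ b ∈ M, ∀ z ∈ N, algebraMap R S b * z ∈ (algebraMap R S).range := by
  obtain ⟨T, rfl⟩ := hN
  obtain ⟨b, hb⟩ := exist_integer_multiples_of_finset M T
  refine ⟨b, b.2, fun z hz => ?_⟩
  induction hz using Submodule.span_induction with
  | mem z hz =>
    obtain ⟨r, hr⟩ := hb z hz
    exact ⟨r, by rw [hr, Algebra.smul_def]⟩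
  | zero => simp
  | add y z _ _ hy hz => rw [mul_add]; exact add_mem hy hz
  | smul r z _ hz => rw [Algebra.smul_def, mul_left_comm]; exact mul_mem ⟨r, rfl⟩ hz

namespace Away

variable (s : R) [IsLocalization.Away s S]

theorem exists_fg_forall_pow_mem_iff {x : S} :
    (∃ N : Submodule R S, N.FG ∧ ∀ n : ℕ, x ^ n ∈ N) ↔
      ∃ K : ℕ, ∀ n : ℕ, algebraMap R S s ^ K * x ^ n ∈ (algebraMap R S).range := by
  constructor
  · rintro ⟨N, hN, hx⟩
    obtain ⟨_, ⟨K, rfl⟩, hK⟩ := exists_mem_forall_mul_mem_range_of_fg (.powers s) hN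
    exact ⟨K, fun n => by simpa using hK _ (hx n)⟩
  · rintro ⟨K, hK⟩
    refine ⟨Submodule.span R {invSelf s ^ K}, Submodule.fg_span_singleton _, fun n => ?_⟩
    obtain ⟨r, hr⟩ := hK n
    rw [Submodule.mem_span_singleton]
    exact ⟨r, by rw [Algebra.smul_def, hr, mul_right_comm, ← mul_pow, mul_invSelf, one_pow,
      one_mul]⟩

theorem mem_range_of_mul_pow_eq {y : S} {k m : ℕ} {a : R}
    (hy : y * algebraMap R S s ^ k = algebraMap R S a) (ha : s ^ (m + k) ∣ s ^ m * a) :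
    y ∈ (algebraMap R S).range := by
  obtain ⟨b, hb⟩ := ha
  refine ⟨b, (algebraMap_pow_isUnit s (m + k)).mul_left_cancel ?_⟩
  calc algebraMap R S s ^ (m + k) * algebraMap R S b = algebraMap R S (s ^ m * a) := by
        rw [hb, map_mul, map_pow]
    _ = algebraMap R S s ^ (m + k) * y := by
        rw [map_mul, map_pow, ← hy, pow_add]
        ring

end Away

end IsLocalization

theorem Submodule.pow_add_algebraMap_mem {R S : Type*} [CommRing R] [CommRing S] [Algebra R S]
    {N : Submodule R S} {x : S} (hx : ∀ n : ℕ, x ^ n ∈ N) (r : R) (n : ℕ) :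
    (x + algebraMap R S r) ^ n ∈ N := by
  rw [add_pow]
  refine N.sum_mem fun i _ => ?_
  have : x ^ i * algebraMap R S r ^ (n - i) * (n.choose i : S) =
      (r ^ (n - i) * n.choose i) • x ^ i := by
    rw [Algebra.smul_def, map_mul, map_pow, map_natCast]
    ring
  rw [this]
  exact N.smul_mem _ (hx i)

namespace Polynomial

theorem aeval_mem_range_of_pow_dvd_coeff {R S : Type*} [CommRing R] [CommRing S] [Algebra R S]
    {s : R} {z : S} {j n : ℕ} (hz : z * algebraMap R S s ^ j ∈ (algebraMap R S).range)
    {q : R[X]} (hq : q.natDegree ≤ n) (hdvd : ∀ i, s ^ (j * n) ∣ q.coeff i) :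
    aeval z q ∈ (algebraMap R S).range := by
  obtain ⟨c, hc⟩ := hz
  rw [aeval_eq_sum_range' (Nat.lt_succ_of_le hq)]
  refine Subring.sum_mem _ fun i hi => ?_
  obtain ⟨e, he⟩ := hdvd i
  have hin : j * n = j * (n - i) + j * i := by
    rw [← Nat.mul_add, Nat.sub_add_cancel (Nat.lt_succ_iff.mp (Finset.mem_range.mp hi))]
  refine ⟨e * s ^ (j * (n - i)) * c ^ i, ?_⟩
  rw [Algebra.smul_def, he, hin]
  simp only [map_mul, map_pow, hc]
  ring

theorem exists_monic_natDegree_eq_coeff_sub_mem {R S : Type*} [CommRing R] [Nontrivial R]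
    [CommRing S] (φ : R →+* S) (I : Ideal S) (hφ : Function.Surjective ((Ideal.Quotient.mk I).comp φ))
    {p : S[X]} (hp : p.Monic) :
    ∃ P : R[X], P.Monic ∧ P.natDegree = p.natDegree ∧ ∀ i, (P.map φ - p).coeff i ∈ I := by
  by_cases hI : I = ⊤
  · exact ⟨X ^ p.natDegree, monic_X_pow _, natDegree_X_pow _, by simp [hI]⟩
  have := Ideal.Quotient.nontrivial_iff.mpr hI
  obtain ⟨P, hPp, hdeg, hP⟩ := lifts_and_natDegree_eq_and_monic
    (map_surjective _ hφ (p.map (Ideal.Quotient.mk I))) (hp.map _)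
  refine ⟨P, hP, hdeg.trans (hp.natDegree_map _), fun i => ?_⟩
  rw [← Ideal.Quotient.eq_zero_iff_mem, coeff_sub, coeff_map, map_sub]
  have hcoeff := congrArg (coeff · i) hPp
  simp only [coeff_map, RingHom.comp_apply] at hcoeff
  rw [hcoeff, sub_self]

end Polynomial

/-- The reductions `R ⧸ tⁿ → C ⧸ (ι t)ⁿ` are bijective for every `n`; the second field is
injectivity. -/
structure IsBijectiveModPow {R C : Type*} [CommRing R] [CommRing C] (t : R) (ι : R →+* C) :
    Prop where
  surjective_mod_pow (n : ℕ) :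
    Function.Surjective ((Ideal.Quotient.mk (Ideal.span {ι t ^ n})).comp ι)
  pow_dvd_of_pow_dvd_map {n : ℕ} {a : R} : ι t ^ n ∣ ι a → t ^ n ∣ a

theorem IsAdicCompletionMap.isBijectiveModPow {R C : Type*} [CommRing R] [CommRing C] {t : R}
    {ι : R →+* C} (hC : IsAdicCompletionMap t ι) : IsBijectiveModPow t ι where
  surjective_mod_pow n c' := by
    obtain ⟨c, rfl⟩ := Ideal.Quotient.mk_surjective c'
    obtain ⟨a, ha⟩ := hC.2.1 n c
    refine ⟨a, Ideal.Quotient.eq.mpr ?_⟩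
    rw [← Ideal.span_singleton_pow, ← neg_mem_iff, neg_sub]
    exact ha
  pow_dvd_of_pow_dvd_map {n a} h := by
    have := hC.2.2 n a (by rwa [Ideal.span_singleton_pow, Ideal.mem_span_singleton])
    rwa [Ideal.span_singleton_pow, Ideal.mem_span_singleton] at this

namespace IsLocalization.Away

variable {A₀ A C A' : Type*} [CommRing A₀] [CommRing A] [CommRing C] [CommRing A']
  [Algebra A₀ A] [Algebra A₀ C] [Algebra C A'] (t : A₀) [IsLocalization.Away t A]
  [IsLocalization.Away (algebraMap A₀ C t) A']

local notation "f" => IsLocalization.Away.map A A' (algebraMap A₀ C) t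

theorem map_comp_algebraMap :
    (f).comp (algebraMap A₀ A) = (algebraMap C A').comp (algebraMap A₀ C) :=
  IsLocalization.map_comp _

theorem map_algebraMap_s5 (a : A₀) : f (algebraMap A₀ A a) = algebraMap C A' (algebraMap A₀ C a) :=
  IsLocalization.map_eq _ _

end IsLocalization.Away

namespace IsBijectiveModPow

open IsLocalization.Away

variable {A₀ A C A' : Type*} [CommRing A₀] [CommRing A] [CommRing C] [CommRing A']
  [Algebra A₀ A] [Algebra A₀ C] [Algebra C A'] {t : A₀} [IsLocalization.Away t A]
  [IsLocalization.Away (algebraMap A₀ C t) A']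

local notation "f" => IsLocalization.Away.map A A' (algebraMap A₀ C) t

theorem mem_range_of_map_mem_range (hι : IsBijectiveModPow t (algebraMap A₀ C)) {y : A}
    (h : f y ∈ (algebraMap C A').range) : y ∈ (algebraMap A₀ A).range := by
  obtain ⟨k, a, hy⟩ := surj (S := A) t y
  obtain ⟨c, hc⟩ := h
  have : algebraMap C A' (c * algebraMap A₀ C t ^ k) = algebraMap C A' (algebraMap A₀ C a) := by
    rw [map_mul, hc, map_pow, ← map_algebraMap_s5 (A := A) t, ← map_pow, ← map_mul, hy,
      map_algebraMap_s5 t]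
  obtain ⟨m, hm⟩ := exists_of_eq (algebraMap A₀ C t) this
  refine mem_range_of_mul_pow_eq t hy (m := m) (hι.pow_dvd_of_pow_dvd_map ⟨c, ?_⟩)
  rw [map_mul, map_pow, ← hm]
  ring

theorem exists_eq_map_add_algebraMap (hι : IsBijectiveModPow t (algebraMap A₀ C)) (x : A') :
    ∃ (y : A) (c : C), x = f y + algebraMap C A' c := by
  obtain ⟨j, c, hx⟩ := surj (algebraMap A₀ C t) x
  obtain ⟨a, ha⟩ := hι.surjective_mod_pow j (Ideal.Quotient.mk _ c)
  obtain ⟨e, he⟩ := Ideal.mem_span_singleton.mp (Ideal.Quotient.eq.mp ha)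
  have hinv : f (invSelf (S := A) t) * algebraMap C A' (algebraMap A₀ C t) = 1 := by
    rw [← map_algebraMap_s5 (A := A) t, ← map_mul, mul_comm, mul_invSelf, map_one]
  have hinvj : f (invSelf (S := A) t) ^ j * algebraMap C A' (algebraMap A₀ C t) ^ j = 1 := by
    rw [← mul_pow, hinv, one_pow]
  refine ⟨algebraMap A₀ A a * invSelf (S := A) t ^ j, -e,
    (algebraMap_pow_isUnit (algebraMap A₀ C t) j).mul_right_cancel ?_⟩
  have he' := congrArg (algebraMap C A') he
  simp only [map_mul, map_pow, map_neg, map_sub, map_algebraMap_s5 t] at he' ⊢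
  linear_combination hx - he' - algebraMap C A' (algebraMap A₀ C a) * hinvj

theorem isIntegral_of_isIntegral_map (hι : IsBijectiveModPow t (algebraMap A₀ C)) {y : A}
    (h : IsIntegral C (f y)) : IsIntegral A₀ y := by
  rcases subsingleton_or_nontrivial A' with _ | _
  · obtain ⟨a, rfl⟩ := hι.mem_range_of_map_mem_range (y := y) ⟨0, Subsingleton.elim (α := A') _ _⟩
    exact isIntegral_algebraMap
  have := ((algebraMap C A').comp (algebraMap A₀ C)).domain_nontrivial
  obtain ⟨j, a, hy⟩ := surj (S := A) t y
  obtain ⟨p, hp, hpy⟩ := h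
  have hn : p.natDegree ≠ 0 := fun h0 => by
    simp [(Monic.natDegree_eq_zero hp).mp h0] at hpy
  obtain ⟨P, hP, hPdeg, hPcoeff⟩ :=
    exists_monic_natDegree_eq_coeff_sub_mem _ _ (hι.surjective_mod_pow (j * p.natDegree)) hp
  refine IsIntegral.of_aeval_monic hP (hPdeg ▸ hn) ?_
  suffices f (aeval y P) ∈ (algebraMap C A').range by
    obtain ⟨b, hb⟩ := hι.mem_range_of_map_mem_range this
    rw [← hb]
    exact isIntegral_algebraMap
  have hfP : f (aeval y P) = aeval (f y) (P.map (algebraMap A₀ C) - p) := by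
    rw [map_sub, aeval_def (f y) p, hpy, sub_zero, aeval_def, aeval_def, hom_eval₂,
      map_comp_algebraMap, eval₂_map]
  rw [hfP]
  refine aeval_mem_range_of_pow_dvd_coeff (s := algebraMap A₀ C t) (j := j)
    (n := p.natDegree) ?_
    ((natDegree_sub_le _ _).trans (max_le (natDegree_map_le.trans hPdeg.le) le_rfl))
    fun i => Ideal.mem_span_singleton.mp (hPcoeff i)
  refine ⟨algebraMap A₀ C a, ?_⟩
  rw [← map_algebraMap_s5 (A := A) t, ← hy, map_mul, map_pow, map_algebraMap_s5 t]

theorem forall_isIntegral_mem_range_iff (hι : IsBijectiveModPow t (algebraMap A₀ C)) :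
    (∀ x : A, IsIntegral A₀ x → x ∈ (algebraMap A₀ A).range) ↔
      (∀ x : A', IsIntegral C x → x ∈ (algebraMap C A').range) := by
  constructor
  · intro H x hx
    obtain ⟨y, c, rfl⟩ := hι.exists_eq_map_add_algebraMap (A := A) x
    have hy : IsIntegral C (f y) := by
      simpa using hx.sub (isIntegral_algebraMap (x := c))
    obtain ⟨a, rfl⟩ := H y (hι.isIntegral_of_isIntegral_map hy)
    exact ⟨algebraMap A₀ C a + c, by rw [map_add, map_algebraMap_s5 (A := A)]⟩
  · intro H y hy
    exact hι.mem_range_of_map_mem_range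
      (H _ (hy.map_of_comp_eq _ _ (map_comp_algebraMap t).symm))

theorem forall_fg_pow_mem_mem_range_iff (hι : IsBijectiveModPow t (algebraMap A₀ C)) :
    (∀ x : A, (∃ N : Submodule A₀ A, N.FG ∧ ∀ n : ℕ, x ^ n ∈ N) →
        x ∈ (algebraMap A₀ A).range) ↔
      (∀ x : A', (∃ N : Submodule C A', N.FG ∧ ∀ n : ℕ, x ^ n ∈ N) →
        x ∈ (algebraMap C A').range) := by
  constructor
  · rintro H x ⟨N, hN, hx⟩
    obtain ⟨y, c, rfl⟩ := hι.exists_eq_map_add_algebraMap (A := A) x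
    obtain ⟨K, hK⟩ := (exists_fg_forall_pow_mem_iff (S := A') (algebraMap A₀ C t)).mp
      ⟨N, hN, fun n => by simpa using N.pow_add_algebraMap_mem hx (-c) n⟩
    have hy : ∃ K : ℕ, ∀ n : ℕ, algebraMap A₀ A t ^ K * y ^ n ∈ (algebraMap A₀ A).range :=
      ⟨K, fun n => hι.mem_range_of_map_mem_range (A' := A') <| by
        rw [map_mul, map_pow, map_pow, map_algebraMap_s5 (A := A)]
        exact hK n⟩
    obtain ⟨a, rfl⟩ := H y ((exists_fg_forall_pow_mem_iff t).mpr hy)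
    exact ⟨algebraMap A₀ C a + c, by rw [map_add, map_algebraMap_s5 (A := A)]⟩
  · intro H y hy
    obtain ⟨K, hK⟩ := (exists_fg_forall_pow_mem_iff (S := A) t).mp hy
    refine hι.mem_range_of_map_mem_range <| H _ <|
      (exists_fg_forall_pow_mem_iff (S := A') (algebraMap A₀ C t)).mpr ⟨K, fun n => ?_⟩
    obtain ⟨a, ha⟩ := hK n
    refine ⟨algebraMap A₀ C a, ?_⟩
    rw [← map_algebraMap_s5 (A := A) t, ha, map_mul, map_pow, map_pow, map_algebraMap_s5]

end IsBijectiveModPow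

theorem stmt5_general {A₀ A C A' : Type*}
    [CommRing A₀] [CommRing A] [CommRing C] [CommRing A']
    [Algebra A₀ A] [Algebra A₀ C] [Algebra C A']
    (t : A₀)
    [IsLocalization.Away t A]
    (hC : IsAdicCompletionMap t (algebraMap A₀ C))
    [IsLocalization.Away (algebraMap A₀ C t) A'] :
    ((∀ x : A, IsIntegral A₀ x → x ∈ (algebraMap A₀ A).range) ↔
      (∀ x : A', IsIntegral C x → x ∈ (algebraMap C A').range)) ∧
    ((∀ x : A, (∃ N : Submodule A₀ A, N.FG ∧ ∀ n : ℕ, x ^ n ∈ N) →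
        x ∈ (algebraMap A₀ A).range) ↔
      (∀ x : A', (∃ N : Submodule C A', N.FG ∧ ∀ n : ℕ, x ^ n ∈ N) →
        x ∈ (algebraMap C A').range)) :=
  ⟨hC.isBijectiveModPow.forall_isIntegral_mem_range_iff,
    hC.isBijectiveModPow.forall_fg_pow_mem_mem_range_iff⟩

/-- Let `A₀` be a commutative ring with a nonzerodivisor `t`, let
`A := A₀[1/t]`, let `Â₀` (here `C`) be the `t`-adic completion of `A₀` and
`A' := Â₀[1/t]`.  Then:
(1) `A₀` is integrally closed in `A` iff `Â₀` is integrally closed in `A'`;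
(2) `A₀` is completely integrally closed in `A` iff `Â₀` is completely
integrally closed in `A'` (where `x` is almost integral over `R` iff all powers
of `x` lie in a common finitely generated `R`-submodule). -/
theorem stmt5 {A₀ A C A' : Type*}
    [CommRing A₀] [CommRing A] [CommRing C] [CommRing A']
    [Algebra A₀ A] [Algebra A₀ C] [Algebra C A']
    (t : A₀) (ht : t ∈ nonZeroDivisors A₀)
    [IsLocalization.Away t A]
    (hC : IsAdicCompletionMap t (algebraMap A₀ C))
    [IsLocalization.Away (algebraMap A₀ C t) A'] :
    ((∀ x : A, IsIntegral A₀ x → x ∈ (algebraMap A₀ A).range) ↔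
      (∀ x : A', IsIntegral C x → x ∈ (algebraMap C A').range)) ∧
    ((∀ x : A, (∃ N : Submodule A₀ A, N.FG ∧ ∀ n : ℕ, x ^ n ∈ N) →
        x ∈ (algebraMap A₀ A).range) ↔
      (∀ x : A', (∃ N : Submodule C A', N.FG ∧ ∀ n : ℕ, x ^ n ∈ N) →
        x ∈ (algebraMap C A').range)) :=
  stmt5_general t hC
end

section
/- Let A₀ be a commutative ring with a nonzerodivisor t, and let B₀ be a t-torsion-free A₀-algebra such that B := B₀[1/t] is a module-finite A₀[1/t]-algebra. Then t·(A₀)*_B ⊆ (A₀)⁺_B, i.e. for every element b ∈ B that is almost integral over A₀, the element t·b is integral over A₀. -/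
/-!
Since `B` is finite over `A = A₀[1/t]`, every element of `B` becomes integral over `A₀` after
multiplication by a power of `t`. The product of the finitely many powers needed for the
generators of a finitely generated `A₀`-submodule `N ∋ bⁿ` gives one `tᵏ` with `tᵏ • N` integral,
and then `(t b)ᵏ⁺¹ = t • (tᵏ • bᵏ⁺¹)` is integral, hence so is `t b`.
-/

section

variable {R B : Type*} [CommRing R] [CommRing B] [Algebra R B]

theorem IsIntegral.smul_of_dvd {a c : R} (hac : a ∣ c) {x : B} (hx : IsIntegral R (a • x)) :
    IsIntegral R (c • x) := by
  obtain ⟨d, rfl⟩ := hac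
  rw [mul_comm, mul_smul]
  exact hx.smul d

theorem Submodule.FG.exists_smul_isIntegral (M : Submonoid R) {N : Submodule R B} (hN : N.FG)
    (h : ∀ y ∈ N, ∃ m : M, IsIntegral R (m • y)) : ∃ m : M, ∀ y ∈ N, IsIntegral R (m • y) := by
  obtain ⟨G, rfl⟩ := hN
  choose f hf using fun g : G => h g (Submodule.subset_span g.2)
  refine ⟨∏ g ∈ G.attach, f g, fun y hy => ?_⟩
  suffices Submodule.span R G ≤
      (integralClosure R B).toSubmodule.comap ((∏ g ∈ G.attach, f g : M) • LinearMap.id) from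
    this hy
  refine Submodule.span_le.2 fun g hg => ?_
  refine IsIntegral.smul_of_dvd ?_ (hf ⟨g, hg⟩)
  rw [Submonoid.coe_finsetProd]
  exact Finset.dvd_prod_of_mem _ (Finset.mem_attach _ _)

theorem IsIntegral.smul_of_pow_smul_pow_succ {r : R} {x : B} {k : ℕ}
    (h : IsIntegral R (r ^ k • x ^ (k + 1))) : IsIntegral R (r • x) := by
  refine IsIntegral.of_pow k.succ_pos ?_
  rw [smul_pow, pow_succ', mul_smul]
  exact h.smul r

end

theorem stmt6_general {A₀ A B : Type*} [CommRing A₀] [CommRing A] [CommRing B]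
    [Algebra A₀ A] [Algebra A₀ B] [Algebra A B]
    [IsScalarTower A₀ A B]
    (t : A₀)
    [IsLocalization.Away t A]
    [Module.Finite A B]
    (b : B) (hb : ∃ N : Submodule A₀ B, N.FG ∧ ∀ n : ℕ, b ^ n ∈ N) :
    IsIntegral A₀ (algebraMap A₀ B t * b) := by
  obtain ⟨N, hNfg, hbN⟩ := hb
  have : Algebra.IsIntegral A B := Algebra.IsIntegral.of_finite A B
  obtain ⟨⟨_, k, rfl⟩, hk⟩ := hNfg.exists_smul_isIntegral (Submonoid.powers t) fun y _ =>
    (Algebra.IsIntegral.isIntegral (R := A) y).exists_multiple_integral_of_isLocalization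
      (Submonoid.powers t) y
  rw [← Algebra.smul_def]
  exact .smul_of_pow_smul_pow_succ (hk _ (hbN (k + 1)))

/-- Let `A₀` be a commutative ring with a nonzerodivisor `t`, and let
`B₀` be a `t`-torsion-free `A₀`-algebra such that `B := B₀[1/t]` is a module-finite
`A := A₀[1/t]`-algebra.  Then for every `b ∈ B` that is almost integral over `A₀`
(i.e. all powers of `b` lie in a common finitely generated `A₀`-submodule of `B`),
the element `t · b` is integral over `A₀`. -/
theorem stmt6 {A₀ B₀ A B : Type*} [CommRing A₀] [CommRing B₀] [CommRing A] [CommRing B]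
    [Algebra A₀ B₀] [Algebra A₀ A] [Algebra B₀ B] [Algebra A₀ B] [Algebra A B]
    [IsScalarTower A₀ B₀ B] [IsScalarTower A₀ A B]
    (t : A₀) (ht : t ∈ nonZeroDivisors A₀)
    [IsLocalization.Away t A]
    [IsLocalization.Away (algebraMap A₀ B₀ t) B]
    (htf : ∀ x : B₀, algebraMap A₀ B₀ t * x = 0 → x = 0)
    [Module.Finite A B]
    (b : B) (hb : ∃ N : Submodule A₀ B, N.FG ∧ ∀ n : ℕ, b ^ n ∈ N) :
    IsIntegral A₀ (algebraMap A₀ B t * b) :=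
  stmt6_general (A := A) t b hb
end

section
/- Let A₀ be a commutative ring with a nonzerodivisor t. Assume that A₀ is t-adically separated (⋂_{n≥1} tⁿA₀ = 0) and that there exists an integer c > 0 with t^c·(A₀)*_{A₀[1/t]} ⊆ A₀, where (A₀)*_{A₀[1/t]} is the complete integral closure of A₀ in A₀[1/t] (equivalently, the subring of powerbounded elements of the Tate ring A₀[1/t] is bounded). Then the ring A₀[1/t] is reduced. -/
/-!
If `b ∈ A₀[1/t]` is nilpotent, so is `t⁻ᵐ b` for every `m`; nilpotent elements are integral,
hence almost integral, so `t^c t⁻ᵐ b ∈ A₀`. Thus `t^c b ∈ A₀` is divisible by every power of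
`t`, so it vanishes by separatedness, and `b = 0` because `t` is a unit in `A₀[1/t]`.
-/

open IsLocalization.Away

theorem IsNilpotent.isIntegral {R B : Type*} [CommRing R] [Ring B] [Algebra R B] {x : B}
    (hx : IsNilpotent x) : IsIntegral R x := by
  obtain ⟨n, hn⟩ := hx
  exact ⟨Polynomial.X ^ n, Polynomial.monic_X_pow n, by simp [hn]⟩

theorem IsIntegral.exists_fg_pow_mem {R B : Type*} [CommRing R] [Ring B] [Algebra R B] {x : B}
    (hx : IsIntegral R x) : ∃ N : Submodule R B, N.FG ∧ ∀ n : ℕ, x ^ n ∈ N :=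
  ⟨_, hx.fg_adjoin_singleton, Subalgebra.pow_mem _ (Algebra.self_mem_adjoin_singleton R x)⟩

theorem mem_span_singleton_pow_of_mul_invSelf_pow_mem_range {R S : Type*} [CommRing R]
    [CommRing S] [Algebra R S] {t : R} (ht : t ∈ nonZeroDivisors R) [IsLocalization.Away t S]
    {a : R} {m : ℕ} (h : algebraMap R S a * invSelf t ^ m ∈ (algebraMap R S).range) :
    a ∈ Ideal.span {t} ^ m := by
  obtain ⟨a', ha'⟩ := h
  rw [Ideal.span_singleton_pow, Ideal.mem_span_singleton']
  refine ⟨a', IsLocalization.injective S (Submonoid.powers_le.mpr ht) ?_⟩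
  rw [map_mul, map_pow, ha', mul_assoc, ← mul_pow, mul_comm (invSelf t), mul_invSelf, one_pow,
    mul_one]

theorem stmt7_general {A₀ A : Type*} [CommRing A₀] [CommRing A] [Algebra A₀ A]
    (t : A₀) (ht : t ∈ nonZeroDivisors A₀) [IsLocalization.Away t A]
    (hsep : ∀ a : A₀, (∀ n : ℕ, 1 ≤ n → a ∈ Ideal.span {t} ^ n) → a = 0)
    (c : ℕ)
    (hbd : ∀ b : A, (∃ N : Submodule A₀ A, N.FG ∧ ∀ n : ℕ, b ^ n ∈ N) →
      algebraMap A₀ A t ^ c * b ∈ (algebraMap A₀ A).range) :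
    IsReduced A := by
  refine ⟨fun b hb => ?_⟩
  have hbd_shift (m : ℕ) :
      algebraMap A₀ A t ^ c * (invSelf t ^ m * b) ∈ (algebraMap A₀ A).range :=
    hbd _ ((Commute.all _ _).isNilpotent_mul_left hb).isIntegral.exists_fg_pow_mem
  obtain ⟨a, ha⟩ : algebraMap A₀ A t ^ c * b ∈ (algebraMap A₀ A).range := by
    simpa using hbd_shift 0
  have ha_zero : a = 0 := hsep a fun m _ =>
    mem_span_singleton_pow_of_mul_invSelf_pow_mem_range ht <| by
      rw [ha, mul_right_comm, mul_assoc]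
      exact hbd_shift m
  rw [ha_zero, map_zero, eq_comm] at ha
  exact (algebraMap_pow_isUnit t c).mul_right_eq_zero.mp ha

/-- Let `A₀` be a commutative ring with a nonzerodivisor `t`.  Assume
`A₀` is `t`-adically separated and there is `c > 0` with
`t^c · (A₀)*_{A₀[1/t]} ⊆ A₀`, where `(A₀)*` is the complete integral closure
(the almost integral elements).  Then `A := A₀[1/t]` is reduced. -/
theorem stmt7 {A₀ A : Type*} [CommRing A₀] [CommRing A] [Algebra A₀ A]
    (t : A₀) (ht : t ∈ nonZeroDivisors A₀) [IsLocalization.Away t A]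
    (hsep : ∀ a : A₀, (∀ n : ℕ, 1 ≤ n → a ∈ Ideal.span {t} ^ n) → a = 0)
    (c : ℕ) (hc : 0 < c)
    (hbd : ∀ b : A, (∃ N : Submodule A₀ A, N.FG ∧ ∀ n : ℕ, b ^ n ∈ N) →
      algebraMap A₀ A t ^ c * b ∈ (algebraMap A₀ A).range) :
    IsReduced A :=
  stmt7_general t ht hsep c hbd
end

section
/- Fix a prime p. Let A₀ be a commutative ring with a nonzerodivisor t such that p ∈ t^p·A₀. Assume that t lies in the Jacobson radical of A₀ (A₀ is t-adically Zariskian) and that the Frobenius map x ↦ x^p on A₀/(t^p) is surjective (A₀/(t^p) is semiperfect; note p = 0 in A₀/(t^p)). Then there exists a sequence (t_n)_{n≥0} of elements of A₀ with t₀ = t such that for every n ≥ 0 one has t_{n+1}^p = t_n·u_n for some unit u_n ∈ A₀^×. -/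
/-!
Put `J = jacobson ⊥` and call `s ∈ J` admissible if `s ^ p ∣ t ^ p`; `t` itself is admissible.
Given an admissible `s`, semiperfectness of `A₀ / (t ^ p)` gives `b` with `s ≡ b ^ p` modulo
`t ^ p`, hence modulo `s ^ p`, so `b ^ p = s * (1 - c * s ^ (p - 1))`, and the second factor is a
unit because `s ^ (p - 1) ∈ J`. Then `b ^ p` is associated to `s`, so `b` is admissible again
(`J` is a radical ideal), and iterating the step produces the sequence.
-/

open Ideal

theorem exists_seq_of_forall_exists {α : Type*} {P : α → Prop} {R : α → α → Prop} {a : α}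
    (ha : P a) (step : ∀ x, P x → ∃ y, P y ∧ R x y) :
    ∃ f : ℕ → α, f 0 = a ∧ ∀ n, R (f n) (f (n + 1)) := by
  choose g hgP hgR using step
  let f : ℕ → {x // P x} := fun n => Nat.rec ⟨a, ha⟩ (fun _ x => ⟨g x x.2, hgP x x.2⟩) n
  exact ⟨fun n => (f n).1, rfl, fun n => hgR _ (f n).2⟩

section

variable {A : Type*} [CommRing A] {p : ℕ}

theorem exists_pow_eq_mul_unit_of_pow_dvd_sub (hp : 2 ≤ p) {s b : A}
    (hs : s ∈ jacobson (⊥ : Ideal A)) (h : s ^ p ∣ s - b ^ p) :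
    ∃ u : Aˣ, b ^ p = s * u := by
  obtain ⟨c, hc⟩ := h
  have hsp : s ^ p = s * s ^ (p - 1) := by rw [← pow_succ']; congr 1; omega
  have hunit : IsUnit (1 - c * s ^ (p - 1)) := by
    refine isUnit_of_sub_one_mem_jacobson_bot _ ?_
    rw [sub_sub_cancel_left]
    exact neg_mem (mul_mem_left _ _ (pow_mem_of_mem _ hs _ (by omega)))
  exact ⟨hunit.unit, by rw [IsUnit.unit_spec]; linear_combination -hc - c * hsp⟩

theorem exists_pow_eq_mul_unit_of_semiperfect (hp : 2 ≤ p) {t s : A}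
    (hfrob : ∀ a : A, ∃ b : A, a - b ^ p ∈ span {t ^ p})
    (hs : s ∈ jacobson (⊥ : Ideal A)) (hst : s ^ p ∣ t ^ p) :
    ∃ b, (b ∈ jacobson (⊥ : Ideal A) ∧ b ^ p ∣ t ^ p) ∧ ∃ u : Aˣ, b ^ p = s * u := by
  obtain ⟨b, hb⟩ := hfrob s
  obtain ⟨u, hu⟩ :=
    exists_pow_eq_mul_unit_of_pow_dvd_sub hp hs (hst.trans (mem_span_singleton.1 hb))
  have hbs : b ^ p ∣ s := ⟨↑u⁻¹, by rw [hu, mul_assoc, Units.mul_inv, mul_one]⟩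
  refine ⟨b, ⟨?_, ?_⟩, u, hu⟩
  · exact isRadical_jacobson ⊥ ⟨p, hu ▸ mul_mem_right _ _ hs⟩
  · exact hbs.trans ((dvd_pow_self s (by omega)).trans hst)

end

theorem stmt8_general (p : ℕ) (hp : p.Prime) {A₀ : Type*} [CommRing A₀]
    (t : A₀)
    (hjac : t ∈ Ideal.jacobson (⊥ : Ideal A₀))
    (hfrob : ∀ a : A₀, ∃ b : A₀, a - b ^ p ∈ Ideal.span {t ^ p}) :
    ∃ ts : ℕ → A₀, ts 0 = t ∧ ∀ n : ℕ, ∃ u : A₀ˣ, ts (n + 1) ^ p = ts n * u :=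
  exists_seq_of_forall_exists (P := fun s => s ∈ jacobson ⊥ ∧ s ^ p ∣ t ^ p) ⟨hjac, dvd_rfl⟩
    fun _ hs => exists_pow_eq_mul_unit_of_semiperfect hp.two_le hfrob hs.1 hs.2

/-- Fix a prime `p`.  Let `A₀` be a commutative ring with a
nonzerodivisor `t` such that `p ∈ t^p · A₀`.  Assume `t` lies in the Jacobson
radical of `A₀` and the Frobenius `x ↦ x^p` on `A₀/(t^p)` is surjective.  Then
there is a sequence `(t_n)` in `A₀` with `t₀ = t` and `t_{n+1}^p = t_n · u_n`
for units `u_n`. -/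
theorem stmt8 (p : ℕ) (hp : p.Prime) {A₀ : Type*} [CommRing A₀]
    (t : A₀) (ht : t ∈ nonZeroDivisors A₀)
    (hpt : (p : A₀) ∈ Ideal.span {t ^ p})
    (hjac : t ∈ Ideal.jacobson (⊥ : Ideal A₀))
    (hfrob : ∀ a : A₀, ∃ b : A₀, a - b ^ p ∈ Ideal.span {t ^ p}) :
    ∃ ts : ℕ → A₀, ts 0 = t ∧ ∀ n : ℕ, ∃ u : A₀ˣ, ts (n + 1) ^ p = ts n * u :=
  stmt8_general p hp t hjac hfrob
end

section
/- Fix a prime p. Let A₀ be a commutative ring with a nonzerodivisor ϖ such that p ∈ ϖ^p·A₀ and ϖ admits a p-th root ϖ^{1/p} ∈ A₀ (i.e. (ϖ^{1/p})^p = ϖ). Let (g^{1/pⁿ})_{n≥0} be a compatible system of elements of A₀ with (g^{1/p^{n+1}})^p = g^{1/pⁿ} for all n. Then the following are equivalent: (a) for every n > 0 and every a ∈ A₀ there exists b ∈ A₀ with g^{1/pⁿ}·a ≡ b^p (mod ϖ·A₀); (b) for every n > 0 and every a ∈ A₀ there exists b ∈ A₀ with g^{1/pⁿ}·a ≡ b^p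 (mod ϖ^p·A₀). -/
/-!
Going down from `ϖ^p` to `ϖ` is trivial. For the converse, with `h = g^{1/p^{n+1}}` and
`x = g^{1/p^{n+2}}`, one shows by induction on `k ≤ p` that `h^k a` is a `p`-th power modulo
`ϖ^k`: if `h^k a - b^p = ϖ^k c` and `h c ≡ d^p (mod ϖ)`, then
`(x b + ϖ^{k/p} d)^p ≡ h b^p + ϖ^k d^p` modulo `p ∈ (ϖ^p)`, which is `h^{k+1} a` modulo
`ϖ^{k+1}`. At `k = p` this is the claim for `h^p = g^{1/p^n}`.
-/

section FrobeniusLifting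

variable {R : Type*} [CommRing R] {p : ℕ} {ϖ ϖroot h x : R}

theorem exists_pow_succ_dvd_pow_succ_mul_sub_pow (hp : p.Prime) (hroot : ϖroot ^ p = ϖ)
    (hpϖ : ϖ ^ p ∣ (p : R)) (hx : x ^ p = h) (hfrob : ∀ c, ∃ d, ϖ ∣ h * c - d ^ p)
    {k : ℕ} (hk : k < p) {a b : R} (hb : ϖ ^ k ∣ h ^ k * a - b ^ p) :
    ∃ b', ϖ ^ (k + 1) ∣ h ^ (k + 1) * a - b' ^ p := by
  obtain ⟨c, hc⟩ := hb
  obtain ⟨d, hd⟩ := hfrob c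
  obtain ⟨r, hr⟩ := exists_add_pow_prime_eq hp (x * b) (ϖroot ^ k * d)
  refine ⟨x * b + ϖroot ^ k * d, ?_⟩
  have hexpand : h ^ (k + 1) * a - (x * b + ϖroot ^ k * d) ^ p
      = ϖ ^ k * (h * c - d ^ p) - p * (x * b * (ϖroot ^ k * d) * r) := by
    rw [hr, mul_pow, mul_pow, hx, ← pow_mul, mul_comm k p, pow_mul, hroot]
    linear_combination h * hc
  rw [hexpand]
  exact dvd_sub (pow_succ ϖ k ▸ mul_dvd_mul_left _ hd) (((pow_dvd_pow ϖ hk).trans hpϖ).mul_right _)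

theorem exists_pow_dvd_pow_mul_sub_pow (hp : p.Prime) (hroot : ϖroot ^ p = ϖ)
    (hpϖ : ϖ ^ p ∣ (p : R)) (hx : x ^ p = h) (hfrob : ∀ c, ∃ d, ϖ ∣ h * c - d ^ p) (a : R) :
    ∀ k ≤ p, ∃ b, ϖ ^ k ∣ h ^ k * a - b ^ p
  | 0, _ => ⟨0, by simp⟩
  | k + 1, hk =>
    have ⟨_, hb⟩ := exists_pow_dvd_pow_mul_sub_pow hp hroot hpϖ hx hfrob a k (by omega)
    exists_pow_succ_dvd_pow_succ_mul_sub_pow hp hroot hpϖ hx hfrob hk hb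

end FrobeniusLifting

theorem stmt9_general (p : ℕ) (hp : p.Prime) {A₀ : Type*} [CommRing A₀]
    (ϖ : A₀)
    (hpϖ : (p : A₀) ∈ Ideal.span {ϖ ^ p})
    (ϖroot : A₀) (hroot : ϖroot ^ p = ϖ)
    (g : ℕ → A₀) (hg : ∀ n : ℕ, g (n + 1) ^ p = g n) :
    (∀ n : ℕ, 0 < n → ∀ a : A₀, ∃ b : A₀, g n * a - b ^ p ∈ Ideal.span {ϖ}) ↔
      (∀ n : ℕ, 0 < n → ∀ a : A₀, ∃ b : A₀, g n * a - b ^ p ∈ Ideal.span {ϖ ^ p}) := by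
  simp only [Ideal.mem_span_singleton] at hpϖ ⊢
  constructor
  · intro hfrob n _ a
    rw [← hg n]
    exact exists_pow_dvd_pow_mul_sub_pow hp hroot hpϖ (hg (n + 1)) (hfrob (n + 1) n.succ_pos) a
      p le_rfl
  · intro hfrob n hn a
    obtain ⟨b, hb⟩ := hfrob n hn a
    exact ⟨b, (dvd_pow_self ϖ hp.ne_zero).trans hb⟩

/-- Fix a prime `p`.  Let `A₀` be a commutative ring with a
nonzerodivisor `ϖ` such that `p ∈ ϖ^p · A₀` and `ϖ` admits a `p`-th root in `A₀`.
Let `(g n)` be a compatible system of `p`-power roots (`g n` plays the role of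
`g^{1/pⁿ}`).  Then the Frobenius of `A₀/(ϖ)` is `(g)^{1/p^∞}`-almost surjective
iff the Frobenius of `A₀/(ϖ^p)` is `(g)^{1/p^∞}`-almost surjective. -/
theorem stmt9 (p : ℕ) (hp : p.Prime) {A₀ : Type*} [CommRing A₀]
    (ϖ : A₀) (hϖ : ϖ ∈ nonZeroDivisors A₀)
    (hpϖ : (p : A₀) ∈ Ideal.span {ϖ ^ p})
    (ϖroot : A₀) (hroot : ϖroot ^ p = ϖ)
    (g : ℕ → A₀) (hg : ∀ n : ℕ, g (n + 1) ^ p = g n) :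
    (∀ n : ℕ, 0 < n → ∀ a : A₀, ∃ b : A₀, g n * a - b ^ p ∈ Ideal.span {ϖ}) ↔
      (∀ n : ℕ, 0 < n → ∀ a : A₀, ∃ b : A₀, g n * a - b ^ p ∈ Ideal.span {ϖ ^ p}) :=
  stmt9_general p hp ϖ hpϖ ϖroot hroot g hg
end

section
/- Fix a prime p. Let A₀ be a commutative ring with a nonzerodivisor ϖ such that p ∈ ϖ^p·A₀ and A₀ is integrally closed in A₀[1/ϖ]. Assume A₀ contains compatible systems of p-power roots (ϖ^{1/pⁿ})_{n≥0} and (g^{1/pⁿ})_{n≥0} (i.e. (ϖ^{1/p^{n+1}})^p = ϖ^{1/pⁿ}, ϖ^{1/p⁰} = ϖ, and (g^{1/p^{n+1}})^p = g^{1/pⁿ}). Then the following are equivalent: (a) for every n > 0 and every a ∈ A₀ there exists b ∈ A₀ with g^{1/pⁿ}·a ≡ b^p (mod ϖ^p·A₀); (b) for every n > 0 and every a ∈ A₀ there exists b ∈ A₀ with ϖ^{1/pⁿ}·g^{1/pⁿ}·a ≡ b^p (mod ϖ^p·A₀). -/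
/-!
Multiplying by `ϖ^{1/pⁿ}` shows that (a) implies (b). Conversely, let
`d^p ≡ ϖ^{1/p^{n+1}} g^{1/p^{n+1}} a mod ϖ^p`. As `p ∈ ϖ^p A₀`, `d^{p²}` is `ϖ^{1/pⁿ}` times an
element congruent to `(g^{1/p^{n+1}} a)^p` mod `ϖ^p`. Integral closedness in `A₀[1/ϖ]` gives
`d = ϖ^{1/p^{n+2}} β` with `β ∈ A₀`, and then `(g^{1/p^{n+1}} a - β^p)^p ∈ ϖ^p A₀`, so again
`g^{1/p^{n+1}} a ≡ β^p mod ϖ`. Finally `g^{1/pⁿ} = (g^{1/p^{n+1}})^{p-1} g^{1/p^{n+1}}` and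
`(g^{1/p^{n+1}})^{p-1} ϖ` is a multiple of `ϖ^{1/p^{n+1}} g^{1/p^{n+1}}`, so a second use of (b)
and the additivity of Frobenius mod `ϖ^p` give (a).
-/

open Ideal Polynomial

section PowPrime

variable {R : Type*} [CommRing R] {p : ℕ}

lemma add_pow_prime_sub_pow_mem_sq (hp : p.Prime) {I : Ideal R} (hpI : (p : R) ∈ I) (x : R)
    {y : R} (hy : y ∈ I) : (x + y) ^ p - x ^ p ∈ I ^ 2 := by
  obtain ⟨r, hr⟩ := exists_add_pow_prime_eq hp x y
  have hpy : (p : R) * y ∈ I ^ 2 := by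
    rw [sq]
    exact mul_mem_mul hpI hy
  rw [hr, show x ^ p + y ^ p + p * x * y * r - x ^ p = y ^ p + p * y * (x * r) by ring]
  exact add_mem (pow_le_pow_right hp.two_le (pow_mem_pow hy p)) (mul_mem_right _ _ hpy)

lemma add_pow_prime_sub_pow_sub_pow_mem (hp : p.Prime) {I : Ideal R} (hpI : (p : R) ∈ I)
    (x y : R) : (x + y) ^ p - x ^ p - y ^ p ∈ I := by
  obtain ⟨r, hr⟩ := exists_add_pow_prime_eq hp x y
  rw [hr, show x ^ p + y ^ p + p * x * y * r - x ^ p - y ^ p = p * (x * y * r) by ring]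
  exact mul_mem_right _ _ hpI

lemma add_sub_add_pow_prime_mem (hp : p.Prime) {I : Ideal R} (hpI : (p : R) ∈ I)
    {x y b c : R} (hx : x - b ^ p ∈ I) (hy : y - c ^ p ∈ I) : x + y - (b + c) ^ p ∈ I := by
  have := add_pow_prime_sub_pow_sub_pow_mem hp hpI b c
  convert add_mem (add_mem hx hy) (neg_mem this) using 1
  ring

lemma dvd_apply_zero_of_pow_succ_eq (hp : p ≠ 0) {s : ℕ → R} (hs : ∀ n, s (n + 1) ^ p = s n) :
    ∀ n, s n ∣ s 0
  | 0 => dvd_rfl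
  | n + 1 => (hs n ▸ dvd_pow_self _ hp).trans (dvd_apply_zero_of_pow_succ_eq hp hs n)

end PowPrime

section IntegrallyClosed

variable {R A : Type*} [CommRing R] [CommRing A] [Algebra R A] [IsIntegrallyClosedIn R A]

lemma IsIntegrallyClosedIn.dvd_of_pow_dvd_pow_of_isUnit {a b : R}
    (ha : IsUnit (algebraMap R A a)) {n : ℕ} (hn : n ≠ 0) (h : a ^ n ∣ b ^ n) : a ∣ b := by
  obtain ⟨z, hz⟩ := h
  set y : A := ↑ha.unit⁻¹ * algebraMap R A b with hy
  have hyn : y ^ n = algebraMap R A z := by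
    rw [hy, mul_pow, ← map_pow, hz, map_mul, map_pow, ← mul_assoc, ← mul_pow,
      IsUnit.val_inv_mul, one_pow, one_mul]
  have hyint : IsIntegral R y := ⟨X ^ n - C z, monic_X_pow_sub_C z hn, by simp [hyn]⟩
  obtain ⟨k, hk⟩ := algebraMap_eq_of_integral hyint
  refine ⟨k, IsIntegralClosure.algebraMap_injective R R A ?_⟩
  rw [map_mul, hk, hy, ← mul_assoc, IsUnit.mul_val_inv, one_mul]

variable (A) in
theorem exists_sub_pow_mem_span_of_mul_sub_pow_mem {p : ℕ} (hp : p.Prime) {ϖ π x d : R}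
    (hϖ : IsUnit (algebraMap R A ϖ)) (hpϖ : (p : R) ∈ span {ϖ ^ p})
    (hπ : π ^ (p * p) ∣ ϖ ^ p) (hd : π ^ p * x - d ^ p ∈ span {ϖ ^ p}) :
    ∃ β, x - β ^ p ∈ span {ϖ} := by
  obtain ⟨c, hc⟩ := hπ
  have hπunit : IsUnit (algebraMap R A π) := by
    have h : IsUnit (algebraMap R A (π ^ (p * p) * c)) := by
      rw [← hc, map_pow]
      exact hϖ.pow p
    rw [map_mul, map_pow] at h
    exact (isUnit_pow_iff (Nat.mul_ne_zero hp.ne_zero hp.ne_zero)).1 (isUnit_of_mul_isUnit_left h)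
  obtain ⟨e, he⟩ : ∃ e, d ^ (p * p) = π ^ (p * p) * (x ^ p + ϖ ^ p * e) := by
    have h := add_pow_prime_sub_pow_mem_sq hp hpϖ (d ^ p) hd
    rw [add_sub_cancel, mul_pow, ← pow_mul, ← pow_mul, span_singleton_pow, mem_span_singleton',
      sq, hc] at h
    obtain ⟨e, he⟩ := h
    exact ⟨-(e * c), by linear_combination he + e * c * π ^ (p * p) * hc⟩
  obtain ⟨β, rfl⟩ := IsIntegrallyClosedIn.dvd_of_pow_dvd_pow_of_isUnit hπunit
    (Nat.mul_ne_zero hp.ne_zero hp.ne_zero) ⟨_, he⟩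
  have hβ : β ^ (p * p) = x ^ p + ϖ ^ p * e := by
    refine IsIntegralClosure.algebraMap_injective R R A
      ((hπunit.pow (p * p)).mul_left_cancel ?_)
    rw [← map_pow, ← map_mul, ← map_mul, ← mul_pow, he]
  refine ⟨β, mem_span_singleton.2 <|
    IsIntegrallyClosedIn.dvd_of_pow_dvd_pow_of_isUnit hϖ hp.ne_zero ?_⟩
  -- `x ^ p = (β ^ p + (x - β ^ p)) ^ p` is `β ^ (p * p) + (x - β ^ p) ^ p` up to multiples of `p`
  have h := add_pow_prime_sub_pow_sub_pow_mem hp hpϖ (β ^ p) (x - β ^ p)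
  rw [add_sub_cancel, ← pow_mul, hβ] at h
  rw [← mem_span_singleton]
  convert neg_mem (add_mem h (mul_mem_right e _ (mem_span_singleton_self _))) using 1
  ring

end IntegrallyClosed

theorem exists_sub_pow_mem_of_forall_mul_sub_pow_mem {R A : Type*} [CommRing R] [CommRing A]
    [Algebra R A] [IsIntegrallyClosedIn R A] {p : ℕ} (hp : p.Prime) {ϖs g : ℕ → R}
    (hϖ : ∀ n, ϖs (n + 1) ^ p = ϖs n) (hg : ∀ n, g (n + 1) ^ p = g n)
    (hϖunit : IsUnit (algebraMap R A (ϖs 0))) (hpϖ : (p : R) ∈ span {ϖs 0 ^ p}) (n : ℕ)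
    (hb : ∀ a, ∃ b, ϖs (n + 1) * g (n + 1) * a - b ^ p ∈ span {ϖs 0 ^ p}) (a : R) :
    ∃ b, g n * a - b ^ p ∈ span {ϖs 0 ^ p} := by
  have hϖdvd := dvd_apply_zero_of_pow_succ_eq hp.ne_zero hϖ
  obtain ⟨d, hd⟩ := hb a
  have hπ : ϖs (n + 2) ^ (p * p) ∣ ϖs 0 ^ p := by
    rw [pow_mul, hϖ, hϖ]
    exact (hϖdvd n).trans (dvd_pow_self _ hp.ne_zero)
  obtain ⟨β, hβ⟩ := exists_sub_pow_mem_span_of_mul_sub_pow_mem A hp hϖunit hpϖ hπ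
    (x := g (n + 1) * a) (d := d) (by rwa [hϖ (n + 1), ← mul_assoc])
  obtain ⟨h₁, hh₁⟩ := mem_span_singleton'.1 hβ
  obtain ⟨r, hr⟩ : ϖs (n + 1) * g (n + 1) ∣ g (n + 1) ^ (p - 1) * ϖs 0 := by
    rw [mul_comm (g (n + 1) ^ (p - 1))]
    exact mul_dvd_mul (hϖdvd _) (dvd_pow_self _ (Nat.sub_ne_zero_of_lt hp.one_lt))
  obtain ⟨c, hc⟩ := hb (r * h₁)
  have hgn : g (n + 1) ^ (p - 1) * g (n + 1) = g n := by
    rw [← pow_succ, Nat.sub_add_cancel hp.one_le, hg]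
  have hX : (g (n + 2) ^ (p - 1) * β) ^ p = g (n + 1) ^ (p - 1) * β ^ p := by
    rw [mul_pow, ← pow_mul, mul_comm (p - 1), pow_mul, hg]
  refine ⟨g (n + 2) ^ (p - 1) * β + c, ?_⟩
  have hsplit : g n * a = (g (n + 2) ^ (p - 1) * β) ^ p + ϖs (n + 1) * g (n + 1) * (r * h₁) := by
    linear_combination (-a) * hgn - hX - g (n + 1) ^ (p - 1) * hh₁ + h₁ * hr
  rw [hsplit]
  exact add_sub_add_pow_prime_mem hp hpϖ (by simp) hc

/-- Fix a prime `p`.  Let `A₀` be a commutative ring with a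
nonzerodivisor `ϖ` such that `p ∈ ϖ^p · A₀` and `A₀` is integrally closed in
`A := A₀[1/ϖ]`.  Assume `A₀` contains compatible systems of `p`-power roots
`(ϖ n)` of `ϖ` and `(g n)` (so `ϖ n = ϖ^{1/pⁿ}`, `g n = g^{1/pⁿ}`).  Then the
Frobenius of `A₀/(ϖ^p)` is `(g)^{1/p^∞}`-almost surjective iff it is
`(ϖg)^{1/p^∞}`-almost surjective. -/
theorem stmt10 (p : ℕ) (hp : p.Prime) {A₀ A : Type*} [CommRing A₀] [CommRing A]
    [Algebra A₀ A]
    (ϖs : ℕ → A₀) (hϖnzd : ϖs 0 ∈ nonZeroDivisors A₀)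
    (hϖ : ∀ n : ℕ, ϖs (n + 1) ^ p = ϖs n)
    (hpϖ : (p : A₀) ∈ Ideal.span {ϖs 0 ^ p})
    [IsLocalization.Away (ϖs 0) A]
    (hic : ∀ x : A, IsIntegral A₀ x → x ∈ (algebraMap A₀ A).range)
    (g : ℕ → A₀) (hg : ∀ n : ℕ, g (n + 1) ^ p = g n) :
    (∀ n : ℕ, 0 < n → ∀ a : A₀, ∃ b : A₀,
        g n * a - b ^ p ∈ Ideal.span {ϖs 0 ^ p}) ↔
      (∀ n : ℕ, 0 < n → ∀ a : A₀, ∃ b : A₀,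
        ϖs n * g n * a - b ^ p ∈ Ideal.span {ϖs 0 ^ p}) := by
  have hinj : Function.Injective (algebraMap A₀ A) :=
    IsLocalization.injective A (M := Submonoid.powers (ϖs 0)) (Submonoid.powers_le.2 hϖnzd)
  have : IsIntegrallyClosedIn A₀ A := isIntegrallyClosedIn_iff.2 ⟨hinj, hic _⟩
  refine ⟨fun ha n hn a => ?_, fun hb n _ a => ?_⟩
  · obtain ⟨b, hb⟩ := ha n hn (ϖs n * a)
    exact ⟨b, by rwa [mul_left_comm, ← mul_assoc] at hb⟩
  · exact exists_sub_pow_mem_of_forall_mul_sub_pow_mem hp hϖ hg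
      (IsLocalization.Away.algebraMap_isUnit (S := A) (ϖs 0)) hpϖ n (hb (n + 1) n.succ_pos) a
end

section
/- Fix a prime p. Let A₀ be a p-torsion-free commutative ring such that the Frobenius map x ↦ x^p on A₀/(p) is surjective (A₀ is semiperfect). Let G be a finite group acting on A₀ by ring automorphisms, and assume that |G| is invertible in A₀. Then the ring of invariants A₀^G is also semiperfect, i.e. the Frobenius map on A₀^G/(p·A₀^G) is surjective. -/
/-!
Average a `p`-th root `b` of `a` modulo `p` over `G`: `b₀ = |G|⁻¹ ∑ σ • b` is invariant, and it is
still a `p`-th root of `a` modulo `p`. Indeed, modulo `p` the Frobenius is additive and every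
`σ • b` is a `p`-th root of `σ • a = a`, so `(b₀ - b)^p = |G|^{-p} ∑ ((σ • b)^p - b^p) = 0`.
Writing `a = b₀^p + p c`, the element `c` is invariant because `p` is a non-zero-divisor.
-/

theorem mul_sum_pow_eq_pow_of_natCast_eq_zero {R ι : Type*} [CommRing R] {p : ℕ} (hp : p.Prime)
    (hp0 : (p : R) = 0) {s : Finset ι} {x : ι → R} {c y : R} (hc : c * s.card = 1)
    (hx : ∀ i ∈ s, x i ^ p = y ^ p) : (c * ∑ i ∈ s, x i) ^ p = y ^ p := by
  nontriviality R
  have := (CharP.charP_iff_prime_eq_zero hp).mpr hp0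
  have := Fact.mk hp
  have hdiff : c * ∑ i ∈ s, x i - y = c * ∑ i ∈ s, (x i - y) := by
    rw [Finset.sum_sub_distrib, Finset.sum_const, nsmul_eq_mul, mul_sub, ← mul_assoc, hc, one_mul]
  rw [← sub_eq_zero, ← sub_pow_char, hdiff, mul_pow, sum_pow_char,
    Finset.sum_eq_zero fun i hi => by rw [sub_pow_char, hx i hi, sub_self], mul_zero]

theorem smul_sum_smul_eq {G M : Type*} [Group G] [Fintype G] [AddCommMonoid M]
    [DistribMulAction G M] (σ : G) (b : M) : σ • ∑ τ : G, τ • b = ∑ τ : G, τ • b := by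
  rw [Finset.smul_sum]
  exact Fintype.sum_equiv (Equiv.mulLeft σ) _ _ fun τ => (mul_smul σ τ b).symm

section MulSemiringAction

variable {G A : Type*} [Group G] [CommRing A] [MulSemiringAction G A]

theorem smul_natCast (σ : G) (n : ℕ) : σ • (n : A) = n :=
  map_natCast (MulSemiringAction.toRingHom G A σ) n

theorem smul_natCast_mul (σ : G) (n : ℕ) (x : A) : σ • ((n : A) * x) = n * σ • x := by
  rw [smul_mul', smul_natCast]

theorem smul_eq_of_mul_natCast_eq_one {e : A} {n : ℕ} (he : e * n = 1) (σ : G) : σ • e = e := by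
  refine left_inv_eq_right_inv (a := (n : A)) ?_ (by rw [mul_comm, he])
  rw [← smul_natCast σ, ← smul_mul', he, smul_one]

theorem smul_eq_of_natCast_mul_smul_eq {n : ℕ} (hn : ∀ x : A, (n : A) * x = 0 → x = 0) {c : A}
    {σ : G} (h : σ • ((n : A) * c) = n * c) : σ • c = c := by
  rw [smul_natCast_mul] at h
  exact sub_eq_zero.mp (hn _ (by rw [mul_sub, h, sub_self]))

theorem sub_smul_pow_mem_span_natCast {p : ℕ} {a b : A} (hb : a - b ^ p ∈ Ideal.span {(p : A)})
    {σ : G} (ha : σ • a = a) : a - (σ • b) ^ p ∈ Ideal.span {(p : A)} := by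
  obtain ⟨d, hd⟩ := Ideal.mem_span_singleton.mp hb
  refine Ideal.mem_span_singleton.mpr ⟨σ • d, ?_⟩
  rw [← smul_natCast_mul, ← hd, smul_sub, ha, smul_pow']

theorem sub_mul_sum_smul_pow_mem_span_natCast [Fintype G] {p : ℕ} (hp : p.Prime) {e : A}
    (he : e * Fintype.card G = 1) {a b : A} (ha : ∀ σ : G, σ • a = a)
    (hb : a - b ^ p ∈ Ideal.span {(p : A)}) :
    a - (e * ∑ σ : G, σ • b) ^ p ∈ Ideal.span {(p : A)} := by
  set π := Ideal.Quotient.mk (Ideal.span {(p : A)})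
  rw [← Ideal.Quotient.eq, map_pow, map_mul, map_sum, Ideal.Quotient.eq.mpr hb, map_pow]
  refine (mul_sum_pow_eq_pow_of_natCast_eq_zero hp ?_ ?_ fun σ _ => ?_).symm
  · rw [← map_natCast π]
    exact Ideal.Quotient.eq_zero_iff_mem.mpr (Ideal.mem_span_singleton_self _)
  · rw [Finset.card_univ, ← map_natCast π, ← map_mul, he, map_one]
  · rw [← map_pow, ← map_pow, ← Ideal.Quotient.eq.mpr hb,
      Ideal.Quotient.eq.mpr (sub_smul_pow_mem_span_natCast hb (ha σ))]

end MulSemiringAction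

/-- Fix a prime `p`.  Let `A₀` be a `p`-torsion-free commutative ring
whose Frobenius `x ↦ x^p` is surjective on `A₀/(p)` (i.e. `A₀` is semiperfect).
Let a finite group `G` act on `A₀` by ring automorphisms with `|G|` invertible
in `A₀`.  Then the ring of invariants `A₀^G` is semiperfect: every `G`-fixed
element `a` can be written `a = b^p + p·c` with `b, c` `G`-fixed. -/
theorem stmt11 (p : ℕ) (hp : p.Prime) {A₀ : Type*} [CommRing A₀]
    (hptf : ∀ x : A₀, (p : A₀) * x = 0 → x = 0)
    (hsp : ∀ a : A₀, ∃ b : A₀, a - b ^ p ∈ Ideal.span {(p : A₀)})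
    (G : Type*) [Group G] [Finite G] [MulSemiringAction G A₀]
    (hinv : IsUnit ((Nat.card G : A₀))) :
    ∀ a : A₀, (∀ σ : G, σ • a = a) →
      ∃ b c : A₀, (∀ σ : G, σ • b = b) ∧ (∀ σ : G, σ • c = c) ∧
        a = b ^ p + p * c := by
  intro a ha
  have := Fintype.ofFinite G
  obtain ⟨e, he⟩ := hinv.exists_left_inv
  rw [Nat.card_eq_fintype_card] at he
  obtain ⟨b, hb⟩ := hsp a
  set b₀ := e * ∑ σ : G, σ • b
  have hb₀ : ∀ σ : G, σ • b₀ = b₀ := fun σ => by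
    rw [smul_mul', smul_eq_of_mul_natCast_eq_one he, smul_sum_smul_eq]
  obtain ⟨c, hc⟩ :=
    Ideal.mem_span_singleton.mp (sub_mul_sum_smul_pow_mem_span_natCast hp he ha hb)
  refine ⟨b₀, c, hb₀, fun σ => smul_eq_of_natCast_mul_smul_eq hptf ?_, by linear_combination hc⟩
  rw [← hc, smul_sub, ha, smul_pow', hb₀]
end

section
/- Fix a prime p. Let A₀ be a p-torsion-free Witt-perfect commutative ring that is integrally closed in A₀[1/p]. Let Â₀ be the p-adic completion of A₀, let I₀ := √(pA₀) be the radical of (p) in A₀, and let I₀' := √(pÂ₀) be the radical of (p) in Â₀. Then I₀' = I₀·Â₀ and I₀ = I₀². -/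
/-!
Write `I = √(t)`. If `bⁿ ≡ t (mod t²)` with `n ≥ 2` (Witt-perfectness with `t = p`, `a = 1`),
then `b ∈ I`, so `t = bⁿ - (bⁿ - t) ∈ I²`. Surjectivity of Frobenius modulo `t` then writes any
`x ∈ I` as `bⁿ + (x - bⁿ)` with `b ∈ I`, and both terms lie in `I²`.
For the completion, every `x ∈ √(pÂ₀)` is congruent modulo `p` to the image of some `a ∈ A₀`,
and injectivity of `A₀/p → Â₀/p` forces `a ∈ I₀`.
-/

/-- A `p`-torsion-free commutative ring `R` is Witt-perfect (Davis–Kedlaya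
criterion): the Frobenius `x ↦ x^p` on `R/(p)` is surjective and for every
`a ∈ R` there is `b ∈ R` with `b^p ≡ p·a (mod p²R)`. -/
def IsWittPerfect (p : ℕ) (R : Type*) [CommRing R] : Prop :=
  (∀ x : R, (p : R) * x = 0 → x = 0) ∧
  (∀ a : R, ∃ b : R, a - b ^ p ∈ Ideal.span {(p : R)}) ∧
  (∀ a : R, ∃ b : R, b ^ p - p * a ∈ Ideal.span {(p : R) ^ 2})

namespace Ideal

variable {R : Type*} [CommRing R] {t : R} {n : ℕ}

theorem mem_radical_span_singleton_sq_of_pow_sub_mem (hn : 2 ≤ n) {b : R}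
    (hb : b ^ n - t ∈ span {t ^ 2}) : t ∈ (span {t}).radical ^ 2 := by
  have hsq : span {t ^ 2} ≤ (span {t}).radical ^ 2 := by
    rw [← span_singleton_pow]
    exact pow_right_mono le_radical 2
  have hb_pow : b ^ n ∈ span {t} := by
    have hle : span {t ^ 2} ≤ span {t} :=
      span_singleton_le_span_singleton.mpr (dvd_pow_self t two_ne_zero)
    simpa using add_mem (hle hb) (mem_span_singleton_self t)
  have hb_rad : b ∈ (span {t}).radical := ⟨n, hb_pow⟩
  simpa using sub_mem (pow_le_pow_right hn (pow_mem_pow hb_rad n)) (hsq hb)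

theorem radical_span_singleton_eq_sq (hn : 2 ≤ n)
    (hfrob : ∀ a : R, ∃ b : R, a - b ^ n ∈ span {t}) (ht : t ∈ (span {t}).radical ^ 2) :
    (span {t}).radical = (span {t}).radical ^ 2 := by
  refine le_antisymm (fun x hx => ?_) (pow_le_self two_ne_zero)
  obtain ⟨b, hb⟩ := hfrob x
  have hb_rad : b ∈ (span {t}).radical :=
    mem_radical_of_pow_mem (by simpa using sub_mem hx (le_radical hb))
  have hspan : span {t} ≤ (span {t}).radical ^ 2 := span_singleton_le_iff_mem _ |>.mpr ht
  simpa using add_mem (pow_le_pow_right hn (pow_mem_pow hb_rad n)) (hspan hb)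

theorem radical_span_singleton_map_eq {S : Type*} [CommRing S] (f : R →+* S) (t : R)
    (hsurj : ∀ c : S, ∃ a : R, c - f a ∈ span {f t})
    (hinj : ∀ a : R, f a ∈ span {f t} → a ∈ span {t}) :
    (span {f t}).radical = map f (span {t}).radical := by
  refine le_antisymm (fun x hx => ?_) ?_
  · obtain ⟨m, hxm⟩ := hx
    obtain ⟨a, ha⟩ := hsurj x
    have ha_pow : f (a ^ m) ∈ span {f t} := by
      rw [← Quotient.eq_zero_iff_mem, map_pow, map_pow,
        ← Quotient.mk_eq_mk_iff_sub_mem x (f a) |>.mpr ha, ← map_pow, Quotient.eq_zero_iff_mem]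
      exact hxm
    have ha_rad : a ∈ (span {t}).radical := ⟨m, hinj _ ha_pow⟩
    have hspan : span {f t} ≤ map f (span {t}).radical := by
      rw [span_singleton_le_iff_mem]
      exact mem_map_of_mem f (le_radical (mem_span_singleton_self t))
    simpa using add_mem (mem_map_of_mem f ha_rad) (hspan ha)
  · calc map f (span {t}).radical ≤ (map f (span {t})).radical := map_radical_le f
      _ = (span {f t}).radical := by rw [map_span, Set.image_singleton]

end Ideal

theorem stmt12_general (p : ℕ) (hp : p.Prime)
    {A₀ C : Type*} [CommRing A₀] [CommRing C]
    [Algebra A₀ C]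
    (hwp : IsWittPerfect p A₀)
    (hC : IsAdicCompletionMap (p : A₀) (algebraMap A₀ C)) :
    (Ideal.span {(p : C)}).radical =
        Ideal.map (algebraMap A₀ C) (Ideal.span {(p : A₀)}).radical ∧
      (Ideal.span {(p : A₀)}).radical =
        (Ideal.span {(p : A₀)}).radical ^ 2 := by
  obtain ⟨-, hfrob, hroot⟩ := hwp
  obtain ⟨-, hsurj, hinj⟩ := hC
  obtain ⟨b, hb⟩ := hroot 1
  rw [mul_one] at hb
  have hp_sq := Ideal.mem_radical_span_singleton_sq_of_pow_sub_mem hp.two_le hb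
  refine ⟨?_, Ideal.radical_span_singleton_eq_sq hp.two_le hfrob hp_sq⟩
  rw [← map_natCast (algebraMap A₀ C) p]
  exact Ideal.radical_span_singleton_map_eq _ _ (by simpa using hsurj 1) (by simpa using hinj 1)

/-- Fix a prime `p`.  Let `A₀` be a `p`-torsion-free Witt-perfect
ring that is integrally closed in `A := A₀[1/p]`.  Let `Â₀` (here `C`) be the
`p`-adic completion of `A₀`, `I₀ := √(pA₀)` and `I₀' := √(pÂ₀)`.  Then
`I₀' = I₀·Â₀` and `I₀ = I₀²`. -/
theorem stmt12 (p : ℕ) (hp : p.Prime)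
    {A₀ A C : Type*} [CommRing A₀] [CommRing A] [CommRing C]
    [Algebra A₀ A] [Algebra A₀ C]
    [IsLocalization.Away ((p : A₀)) A]
    (hwp : IsWittPerfect p A₀)
    (hic : ∀ x : A, IsIntegral A₀ x → x ∈ (algebraMap A₀ A).range)
    (hC : IsAdicCompletionMap (p : A₀) (algebraMap A₀ C)) :
    (Ideal.span {(p : C)}).radical =
        Ideal.map (algebraMap A₀ C) (Ideal.span {(p : A₀)}).radical ∧
      (Ideal.span {(p : A₀)}).radical =
        (Ideal.span {(p : A₀)}).radical ^ 2 :=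
  stmt12_general p hp hwp hC
end

section
/- Let A₀ be a commutative ring with a nonzerodivisor t, put A := A₀[1/t], and let B be a finite étale A-algebra. Assume that A₀ is integrally closed in A. Then for every element b ∈ B that is integral over A₀, one has Tr_{B/A}(b) ∈ A₀. -/
/-!
If a monic `q` over `A₀` kills `b`, then in a basis of `B` the matrix `M` of multiplication by `b`
satisfies `q(X) • 1 = (X • 1 - M) * Q(X)` in `Matrix n n A[X]`; taking determinants, the
characteristic polynomial of `M` divides `q ^ n`. By Kronecker's theorem
(`Polynomial.isIntegral_coeff_of_dvd`) the coefficients of a monic divisor of a monic polynomial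
over `A₀` are integral over `A₀`; in particular so is the trace, which is minus the subleading
coefficient. As `A₀` is integrally closed in `A`, the trace lies in `A₀`.
-/

open Polynomial

theorem Matrix.charpoly_dvd_pow_card_of_aeval_eq_zero {R n : Type*} [CommRing R] [Fintype n]
    [DecidableEq n] {M : Matrix n n R} {p : R[X]} (hp : aeval M p = 0) :
    M.charpoly ∣ p ^ Fintype.card n := by
  obtain ⟨W, hW⟩ : C X - X ∣ C p - p.map (algebraMap R R[X]) := by
    have h := X_sub_C_dvd_sub_C_eval (p := p.map (algebraMap R R[X])) (a := X)
    rwa [eval_map_algebraMap, aeval_X_left_apply, ← neg_dvd, ← dvd_neg, neg_sub, neg_sub] at h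
  let ι := (Algebra.ofId R R[X]).mapMatrix (m := n)
  have hfactor := congrArg (aeval (ι M)) hW
  rw [map_sub, aeval_map_algebraMap, aeval_algHom_apply ι M p, hp, map_zero, sub_zero, map_mul,
    map_sub, aeval_C, aeval_C, aeval_X] at hfactor
  change algebraMap R[X] _ p = M.charmatrix * _ at hfactor
  have hdet := congrArg Matrix.det hfactor
  rw [det_mul, Algebra.algebraMap_eq_smul_one, det_smul, det_one, mul_one] at hdet
  exact ⟨_, hdet⟩

theorem Matrix.isIntegral_trace_of_isIntegral {R S n : Type*} [CommRing R] [CommRing S]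
    [Algebra R S] [Fintype n] [DecidableEq n] {M : Matrix n n S} (hM : IsIntegral R M) :
    IsIntegral R M.trace := by
  obtain ⟨p, hp, hpM⟩ := hM
  have hdvd : M.charpoly ∣ (p ^ Fintype.card n).map (algebraMap R S) := by
    rw [Polynomial.map_pow]
    exact charpoly_dvd_pow_card_of_aeval_eq_zero (by rwa [aeval_map_algebraMap, aeval_def])
  have hcoeff := isIntegral_coeff_of_dvd _ _ (hp.pow _) M.charpoly_monic hdvd
  rw [trace_eq_neg_charpoly_nextCoeff, nextCoeff]
  split_ifs
  · exact isIntegral_zero.neg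
  · exact (hcoeff _).neg

theorem Algebra.isIntegral_trace_of_isIntegral {R A B : Type*} [CommRing R] [CommRing A]
    [CommRing B] [Algebra R A] [Algebra A B] [Algebra R B] [IsScalarTower R A B] {b : B}
    (hb : IsIntegral R b) : IsIntegral R (Algebra.trace A B b) := by
  classical
  by_cases hfree : ∃ s : Finset B, Nonempty (Module.Basis s A B)
  · obtain ⟨s, ⟨c⟩⟩ := hfree
    rw [trace_eq_matrix_trace c]
    exact Matrix.isIntegral_trace_of_isIntegral (hb.map ((leftMulMatrix c).restrictScalars R))
  -- Junk value: `Algebra.trace` is `0` when `B` has no finite `A`-basis.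
  · rw [trace_eq_zero_of_not_exists_basis A hfree, LinearMap.zero_apply]
    exact isIntegral_zero

theorem stmt13_general {A₀ A B : Type u} [CommRing A₀] [CommRing A] [CommRing B]
    [Algebra A₀ A] [Algebra A B] [Algebra A₀ B] [IsScalarTower A₀ A B]
    (hic : ∀ x : A, IsIntegral A₀ x → x ∈ (algebraMap A₀ A).range)
    (b : B) (hb : IsIntegral A₀ b) :
    Algebra.trace A B b ∈ (algebraMap A₀ A).range :=
  hic _ (Algebra.isIntegral_trace_of_isIntegral hb)

/-- Let `A₀` be a commutative ring with a nonzerodivisor `t`, put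
`A := A₀[1/t]`, and let `B` be a finite étale `A`-algebra.  Assume `A₀` is
integrally closed in `A`.  Then for every `b ∈ B` integral over `A₀`, the trace
`Tr_{B/A}(b)` lies in (the image of) `A₀`. -/
theorem stmt13 {A₀ A B : Type u} [CommRing A₀] [CommRing A] [CommRing B]
    [Algebra A₀ A] [Algebra A B] [Algebra A₀ B] [IsScalarTower A₀ A B]
    (t : A₀) (ht : t ∈ nonZeroDivisors A₀) [IsLocalization.Away t A]
    [Module.Finite A B] [Algebra.Etale A B]
    (hic : ∀ x : A, IsIntegral A₀ x → x ∈ (algebraMap A₀ A).range)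
    (b : B) (hb : IsIntegral A₀ b) :
    Algebra.trace A B b ∈ (algebraMap A₀ A).range :=
  stmt13_general hic b hb
end
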